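/- arXiv:0810.0693 — 5 statements merged into one kernel-verified Lean document; each statement's English description precedes it below -/
import Mathlib

section
/- Let G = (Q, A, R, π) be a nonadaptive-query single-prover r-round game and let G' be the two-prover one-round game obtained by oracularizing G. Then every no-signaling strategy of G' has winning probability at most 1 − (1 − w(G))/(3r); in other words, the no-signaling value satisfies w_ns(G') ≤ 1 − (1 − w(G))/(3r). -/
/-!
From a no-signaling strategy `θ'` the single prover builds a strategy that, in round `j`, answers
with the conditional law of prover 2's `j`-th answer at cutoff `j` given its first `j - 1` answers;
by no-signaling this depends only on the questions asked so far. Let `ε_k(q)` be the probability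
that the provers disagree at cutoff `k`. Prover 2's answers at cutoff `k` are `2 ε_k`-close in `ℓ¹`
to the length-`k` prefix of prover 1's answers, and induction on `k` makes the first `k` answers of
the simulated prover `4 Σ_{j ≤ k} ε_j`-close to that prefix. Hence the simulated prover passes the
Simulation Test at most `2 Σ_k ε_k` less often than prover 1, who fails it at most as often as the
verifier rejects at cutoff `1`. As `ε_k` is also at most the rejection probability `δ_k` at cutoff
`k`, we get `1 - w(G) ≤ 3 Σ_k δ_k = 3 r (1 - w(G'))`.
-/

attribute [local instance] Classical.propDecidable

noncomputable section

/-- The length-`k` prefix of a tuple indexed by `Fin r` (with junk values in positions `≥ r`,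
which are never used when `k ≤ r`). -/
def pref {X : Type*} [Nonempty X] {r : ℕ} (x : Fin r → X) (k : ℕ) : Fin k → X :=
  fun i => if h : (i : ℕ) < r then x ⟨i, h⟩ else Classical.arbitrary X

/-- `σ` is a (randomized) strategy of the prover in a nonadaptive-query single-prover
`r`-round game: `σ j qs as` is the probability distribution of the answer in round `j+1`,
given the questions `qs` of the first `j+1` rounds and the answers `as` of the first
`j` rounds. -/
def IsSeqStrategy {Q A : Type*} [Fintype A] (r : ℕ)
    (σ : (j : ℕ) → (Fin (j + 1) → Q) → (Fin j → A) → A → ℝ) : Prop :=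
  ∀ j, j < r → ∀ (qs : Fin (j + 1) → Q) (as : Fin j → A),
    (∀ a, 0 ≤ σ j qs as a) ∧ (∑ a, σ j qs as a) = 1

/-- The probability `θ(a₁,…,a_r | q₁,…,q_r)` induced by a single-prover strategy. -/
def seqJoint {Q A : Type*} [Fintype A] [Nonempty Q] [Nonempty A] (r : ℕ)
    (σ : (j : ℕ) → (Fin (j + 1) → Q) → (Fin j → A) → A → ℝ)
    (q : Fin r → Q) (a : Fin r → A) : ℝ :=
  ∏ j : Fin r, σ j.1 (pref q (j.1 + 1)) (pref a j.1) (a j)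

/-- The winning probability of a single-prover strategy in the game `(Q, A, R, π)`. -/
def seqWinProb {Q A : Type*} [Fintype Q] [Fintype A] [Nonempty Q] [Nonempty A] (r : ℕ)
    (π : (Fin r → Q) → ℝ) (R : (Fin r → Q) → (Fin r → A) → Bool)
    (σ : (j : ℕ) → (Fin (j + 1) → Q) → (Fin j → A) → A → ℝ) : ℝ :=
  ∑ q, π q * ∑ a, seqJoint r σ q a * (if R q a then 1 else 0)

/-- The value `w(G)` of the nonadaptive-query single-prover `r`-round game `G = (Q, A, R, π)`:
the supremum of winning probabilities over all strategies of the prover. -/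
def seqGameValue {Q A : Type*} [Fintype Q] [Fintype A] [Nonempty Q] [Nonempty A] (r : ℕ)
    (π : (Fin r → Q) → ℝ) (R : (Fin r → Q) → (Fin r → A) → Bool) : ℝ :=
  sSup {w : ℝ | ∃ σ, IsSeqStrategy r σ ∧ w = seqWinProb r π R σ}

/-- The first `k` coordinates of `a : Fin r → A` coincide with `a' : Fin k → A`
(trivially true beyond position `r`; for `k ≤ r` this is exactly prefix agreement). -/
def consistentPrefix {A : Type*} (r k : ℕ) (a : Fin r → A) (a' : Fin k → A) : Prop :=
  ∀ i : Fin k, ∀ h : (i : ℕ) < r, a ⟨i, h⟩ = a' i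

/-- `θ'` is a no-signaling strategy of the oracularization `G'` of `G`: for each question
`q ∈ Q^r` to the first prover and each round cutoff `k ∈ {1,…,r}`, `θ' q k` is a probability
distribution on `A^r × A^k`, the marginal on `A^r` does not depend on `k`, and the marginal on
`A^k` depends only on the length-`k` prefix of `q`. -/
def IsNoSignalingStrategy {Q A : Type*} [Fintype Q] [Fintype A] [Nonempty Q] [Nonempty A]
    (r : ℕ)
    (θ' : (Fin r → Q) → (k : ℕ) → (Fin r → A) → (Fin k → A) → ℝ) : Prop :=
  (∀ q k, 1 ≤ k → k ≤ r → ∀ a a', 0 ≤ θ' q k a a') ∧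
  (∀ q k, 1 ≤ k → k ≤ r → (∑ a : Fin r → A, ∑ a' : Fin k → A, θ' q k a a') = 1) ∧
  (∀ q k k', 1 ≤ k → k ≤ r → 1 ≤ k' → k' ≤ r → ∀ a : Fin r → A,
    (∑ a' : Fin k → A, θ' q k a a') = ∑ a' : Fin k' → A, θ' q k' a a') ∧
  (∀ q q' k, 1 ≤ k → k ≤ r → pref q k = pref q' k →
    ∀ a' : Fin k → A, (∑ a : Fin r → A, θ' q k a a') = ∑ a : Fin r → A, θ' q' k a a')

/-- The winning probability of a strategy `θ'` in the oracularized game `G'`: the verifier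
draws `q ∼ π` and `k ∈ {1,…,r}` uniformly, sends `q` to prover 1 and `q_{[1,k]}` to prover 2,
and accepts iff `R(a | q)` holds (Simulation Test) and `a_{[1,k]} = a'` (Consistency Test). -/
def oracWinProb {Q A : Type*} [Fintype Q] [Fintype A] [Nonempty Q] [Nonempty A] (r : ℕ)
    (π : (Fin r → Q) → ℝ) (R : (Fin r → Q) → (Fin r → A) → Bool)
    (θ' : (Fin r → Q) → (k : ℕ) → (Fin r → A) → (Fin k → A) → ℝ) : ℝ :=
  (1 / (r : ℝ)) * ∑ k ∈ Finset.Icc 1 r, ∑ q, π q *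
    ∑ a : Fin r → A, ∑ a' : Fin k → A,
      θ' q k a a' * (if R q a = true ∧ consistentPrefix r k a a' then 1 else 0)

open Finset

section Prefix

variable {X : Type*} [Nonempty X]

lemma pref_apply {r k : ℕ} (x : Fin r → X) (i : Fin k) (h : (i : ℕ) < r) :
    pref x k i = x ⟨i, h⟩ :=
  dif_pos h

@[simp] lemma pref_self {r : ℕ} (x : Fin r → X) : pref x r = x :=
  funext fun i => pref_apply x i i.2

lemma pref_pref {n r k : ℕ} (hk : k ≤ r) (x : Fin n → X) : pref (pref x r) k = pref x k := by
  funext i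
  simp only [pref, dif_pos (i.2.trans_le hk)]

lemma pref_snoc_of_le {k m : ℕ} (hm : m ≤ k) (x : Fin k → X) (b : X) :
    pref (Fin.snoc x b : Fin (k + 1) → X) m = pref x m := by
  funext i
  have hi : (i : ℕ) < k := i.2.trans_le hm
  rw [pref_apply _ i (Nat.lt_succ_of_lt hi), pref_apply x i hi]
  exact Fin.snoc_castSucc (α := fun _ => X) b x ⟨i, hi⟩

lemma pref_succ {r k : ℕ} (hk : k < r) (x : Fin r → X) :
    pref x (k + 1) = Fin.snoc (pref x k) (x ⟨k, hk⟩) := by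
  funext i
  induction i using Fin.lastCases with
  | last => rw [Fin.snoc_last]; exact pref_apply x _ hk
  | cast j =>
    rw [Fin.snoc_castSucc, pref_apply x j (j.2.trans hk),
      pref_apply x j.castSucc (j.2.trans hk)]
    rfl

lemma consistentPrefix_iff {r k : ℕ} (hk : k ≤ r) (a : Fin r → X) (a' : Fin k → X) :
    consistentPrefix r k a a' ↔ pref a k = a' := by
  refine ⟨fun h => funext fun i => ?_, fun h i hi => ?_⟩
  · rw [pref_apply a i (i.2.trans_le hk), h i]
  · rw [← congrFun h i, pref_apply a i hi]

end Prefix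

lemma sum_fun_fin_succ_eq_sum_snoc {A M : Type*} [Fintype A] [AddCommMonoid M] {k : ℕ}
    (f : (Fin (k + 1) → A) → M) : ∑ x, f x = ∑ x : Fin k → A, ∑ a, f (Fin.snoc x a) := by
  rw [← (Fin.snocEquiv fun _ => A).sum_comp f, Fintype.sum_prod_type, sum_comm]
  rfl

section RealFunctions

variable {X : Type*} [Fintype X]

lemma sum_abs_sub_le_sum_abs_sub_add (f g h : X → ℝ) :
    ∑ x, |f x - h x| ≤ ∑ x, |f x - g x| + ∑ x, |g x - h x| := by
  rw [← sum_add_distrib]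
  exact sum_le_sum fun x _ => abs_sub_le _ _ _

lemma sum_sub_mul_indicator_le_half_sum_abs_sub {f g : X → ℝ} (hfg : ∑ x, f x = ∑ x, g x)
    (p : X → Prop) [DecidablePred p] :
    ∑ x, (f x - g x) * (if p x then 1 else 0) ≤ (∑ x, |f x - g x|) / 2 := by
  have hpoint : ∀ x, (f x - g x) * (if p x then 1 else 0) ≤ (|f x - g x| + (f x - g x)) / 2 := by
    intro x
    split_ifs
    · linarith [le_abs_self (f x - g x)]
    · linarith [neg_abs_le (f x - g x)]
  calc _ ≤ ∑ x, (|f x - g x| + (f x - g x)) / 2 := sum_le_sum fun x _ => hpoint x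
    _ = (∑ x, |f x - g x|) / 2 := by
      rw [← sum_div, sum_add_distrib, sum_sub_distrib, hfg, sub_self, add_zero]

/-- Coupling bound: both terms of the difference dominate the weight of `θ` on the graph of `f`. -/
lemma sum_abs_marginal_sub_map_le {Y : Type*} [Fintype Y] [DecidableEq Y] {θ : X → Y → ℝ}
    (hθ : ∀ x y, 0 ≤ θ x y) (f : X → Y) :
    ∑ y, |∑ x, θ x y - ∑ x, (∑ y', θ x y') * (if f x = y then 1 else 0)|
      ≤ 2 * ∑ x, ∑ y, θ x y * (if f x = y then 0 else 1) := by
  set g : Y → ℝ := fun y => ∑ x, (∑ y', θ x y') * (if f x = y then 1 else 0)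
  set d : Y → ℝ := fun y => ∑ x, θ x y * (if f x = y then 1 else 0)
  have hd_le : ∀ y, d y ≤ ∑ x, θ x y := fun y =>
    sum_le_sum fun x _ => by split_ifs <;> simp [hθ x y]
  have hd_le_g : ∀ y, d y ≤ g y := fun y =>
    sum_le_sum fun x _ => by
      split_ifs
      · simpa using single_le_sum (fun y' _ => hθ x y') (mem_univ y)
      · simp
  have hsum_g : ∑ y, g y = ∑ x, ∑ y, θ x y := by
    simp only [g]
    rw [sum_comm]
    simp
  have hsum_d :
      ∑ y, d y + ∑ x, ∑ y, θ x y * (if f x = y then 0 else 1) = ∑ x, ∑ y, θ x y := by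
    simp only [d]
    rw [sum_comm, ← sum_add_distrib]
    refine sum_congr rfl fun x _ => ?_
    rw [← sum_add_distrib]
    refine sum_congr rfl fun y _ => ?_
    split_ifs <;> ring
  calc ∑ y, |∑ x, θ x y - g y| ≤ ∑ y, ((∑ x, θ x y - d y) + (g y - d y)) :=
        sum_le_sum fun y _ => abs_le.mpr ⟨by linarith [hd_le y], by linarith [hd_le_g y]⟩
    _ ≤ _ := by
      rw [sum_add_distrib, sum_sub_distrib, sum_sub_distrib, sum_comm, hsum_g]
      linarith

def normalizeOrUniform (m : X → ℝ) (x : X) : ℝ :=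
  if 0 < ∑ y, m y then m x / ∑ y, m y else (Fintype.card X : ℝ)⁻¹

lemma normalizeOrUniform_nonneg {m : X → ℝ} (hm : ∀ x, 0 ≤ m x) (x : X) :
    0 ≤ normalizeOrUniform m x := by
  unfold normalizeOrUniform
  split_ifs with h
  · exact div_nonneg (hm x) h.le
  · positivity

lemma sum_normalizeOrUniform [Nonempty X] (m : X → ℝ) : ∑ x, normalizeOrUniform m x = 1 := by
  unfold normalizeOrUniform
  split_ifs with h
  · rw [← sum_div, div_self h.ne']
  · rw [sum_const, card_univ, nsmul_eq_mul, mul_inv_cancel₀ (by positivity)]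

lemma sum_abs_mul_normalizeOrUniform_sub [Nonempty X] {m : X → ℝ} (hm : ∀ x, 0 ≤ m x) {t : ℝ}
    (ht : 0 ≤ t) : ∑ x, |t * normalizeOrUniform m x - m x| = |t - ∑ x, m x| := by
  by_cases h : 0 < ∑ x, m x
  · have hpoint : ∀ x, |t * normalizeOrUniform m x - m x|
        = m x / (∑ y, m y) * |t - ∑ y, m y| := fun x => by
      rw [normalizeOrUniform, if_pos h,
        show t * (m x / ∑ y, m y) - m x = m x / (∑ y, m y) * (t - ∑ y, m y) by field_simp,
        abs_mul, abs_of_nonneg (div_nonneg (hm x) h.le)]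
    rw [sum_congr rfl fun x _ => hpoint x, ← sum_mul, ← sum_div, div_self h.ne', one_mul]
  · have hzero : ∑ x, m x = 0 := le_antisymm (not_lt.mp h) (sum_nonneg fun x _ => hm x)
    have hm0 : ∀ x, m x = 0 := fun x =>
      (sum_eq_zero_iff_of_nonneg fun x _ => hm x).mp hzero x (mem_univ x)
    have hpoint : ∀ x, |t * normalizeOrUniform m x - m x| = t * (Fintype.card X : ℝ)⁻¹ :=
      fun x => by rw [normalizeOrUniform, if_neg h, hm0, sub_zero, abs_of_nonneg (by positivity)]
    rw [sum_congr rfl fun x _ => hpoint x, sum_const, card_univ, nsmul_eq_mul, hzero, sub_zero,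
      abs_of_nonneg ht]
    field_simp

end RealFunctions

section SequentialStrategy

variable {Q A : Type*} [Nonempty Q] [Nonempty A] {r : ℕ}
  (σ : (j : ℕ) → (Fin (j + 1) → Q) → (Fin j → A) → A → ℝ)

def seqPrefixJoint (k : ℕ) (q : Fin r → Q) (as : Fin k → A) : ℝ :=
  ∏ j : Fin k, σ j (pref q (j + 1)) (pref as j) (as j)

lemma seqJoint_eq_seqPrefixJoint [Fintype A] (q : Fin r → Q) :
    seqJoint r σ q = seqPrefixJoint σ r q :=
  rfl

lemma seqPrefixJoint_snoc (k : ℕ) (q : Fin r → Q) (as : Fin k → A) (a : A) :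
    seqPrefixJoint σ (k + 1) q (Fin.snoc as a)
      = seqPrefixJoint σ k q as * σ k (pref q (k + 1)) as a := by
  rw [seqPrefixJoint, Fin.prod_univ_castSucc]
  congr 1
  · refine prod_congr rfl fun j _ => ?_
    rw [Fin.val_castSucc, Fin.snoc_castSucc, pref_snoc_of_le j.2.le]
  · rw [Fin.val_last, Fin.snoc_last, pref_snoc_of_le le_rfl, pref_self]

variable {σ}

lemma seqPrefixJoint_nonneg [Fintype A] (hσ : IsSeqStrategy r σ) {k : ℕ} (hk : k ≤ r)
    (q : Fin r → Q) (as : Fin k → A) : 0 ≤ seqPrefixJoint σ k q as :=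
  prod_nonneg fun j _ => (hσ j (j.2.trans_le hk) _ _).1 _

lemma sum_seqPrefixJoint [Fintype A] (hσ : IsSeqStrategy r σ) {k : ℕ} (hk : k ≤ r)
    (q : Fin r → Q) : ∑ as, seqPrefixJoint σ k q as = 1 := by
  induction k with
  | zero => simp [seqPrefixJoint]
  | succ k ih =>
    simp only [sum_fun_fin_succ_eq_sum_snoc, seqPrefixJoint_snoc, ← mul_sum,
      (hσ k hk _ _).2, mul_one]
    exact ih (Nat.le_of_succ_le hk)

lemma seqWinProb_le_one [Fintype Q] [Fintype A] {π : (Fin r → Q) → ℝ} (hπ0 : ∀ q, 0 ≤ π q)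
    (hπ1 : ∑ q, π q = 1) (R : (Fin r → Q) → (Fin r → A) → Bool) (hσ : IsSeqStrategy r σ) :
    seqWinProb r π R σ ≤ 1 := by
  have hwin : ∀ q, ∑ a, seqJoint r σ q a * (if R q a then 1 else 0) ≤ 1 := fun q =>
    calc ∑ a, seqJoint r σ q a * (if R q a then 1 else 0) ≤ ∑ a, seqJoint r σ q a :=
          sum_le_sum fun a _ => mul_le_of_le_one_right
            (seqPrefixJoint_nonneg hσ le_rfl q a) (by split_ifs <;> norm_num)
      _ = 1 := sum_seqPrefixJoint hσ le_rfl q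
  calc seqWinProb r π R σ ≤ ∑ q, π q * 1 :=
        sum_le_sum fun q _ => mul_le_mul_of_nonneg_left (hwin q) (hπ0 q)
    _ = 1 := by simp [hπ1]

lemma seqWinProb_le_seqGameValue [Fintype Q] [Fintype A] {π : (Fin r → Q) → ℝ}
    (hπ0 : ∀ q, 0 ≤ π q) (hπ1 : ∑ q, π q = 1) (R : (Fin r → Q) → (Fin r → A) → Bool)
    (hσ : IsSeqStrategy r σ) :
    seqWinProb r π R σ ≤ seqGameValue r π R :=
  le_csSup ⟨1, by rintro w ⟨σ', hσ', rfl⟩; exact seqWinProb_le_one hπ0 hπ1 R hσ'⟩ ⟨σ, hσ, rfl⟩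

end SequentialStrategy

section Marginals

variable {Q A : Type*} [Fintype A] [Nonempty A] {r : ℕ}
  (θ' : (Fin r → Q) → (k : ℕ) → (Fin r → A) → (Fin k → A) → ℝ)

def firstProverMarginal (q : Fin r → Q) (a : Fin r → A) : ℝ :=
  ∑ a' : Fin r → A, θ' q r a a'

def secondProverMarginal (k : ℕ) (q : Fin r → Q) (a' : Fin k → A) : ℝ := ∑ a, θ' q k a a'

def firstProverPrefixMarginal (k : ℕ) (q : Fin r → Q) (as : Fin k → A) : ℝ :=
  ∑ a, firstProverMarginal θ' q a * if pref a k = as then 1 else 0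

def consistencyError (k : ℕ) (q : Fin r → Q) : ℝ :=
  ∑ a, ∑ a' : Fin k → A, θ' q k a a' * if pref a k = a' then 0 else 1

def acceptProb (R : (Fin r → Q) → (Fin r → A) → Bool) (k : ℕ) (q : Fin r → Q) : ℝ :=
  ∑ a, ∑ a' : Fin k → A, θ' q k a a' * if R q a = true ∧ consistentPrefix r k a a' then 1 else 0

@[simp] lemma firstProverPrefixMarginal_self (q : Fin r → Q) :
    firstProverPrefixMarginal θ' r q = firstProverMarginal θ' q := by
  funext a'
  simp [firstProverPrefixMarginal]

lemma sum_firstProverPrefixMarginal (k : ℕ) (q : Fin r → Q) :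
    ∑ as : Fin k → A, firstProverPrefixMarginal θ' k q as = ∑ a, firstProverMarginal θ' q a := by
  simp only [firstProverPrefixMarginal]
  rw [sum_comm]
  simp

lemma sum_firstProverPrefixMarginal_snoc {k : ℕ} (hk : k < r) (q : Fin r → Q)
    (as : Fin k → A) :
    ∑ b, firstProverPrefixMarginal θ' (k + 1) q (Fin.snoc as b)
      = firstProverPrefixMarginal θ' k q as := by
  simp only [firstProverPrefixMarginal]
  rw [sum_comm]
  refine sum_congr rfl fun a _ => ?_
  simp only [← mul_sum, pref_succ hk, Fin.snoc_inj]
  by_cases h : pref a k = as <;> simp [h]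

end Marginals

section NoSignaling

variable {Q A : Type*} [Fintype Q] [Fintype A] [Nonempty Q] [Nonempty A] {r : ℕ}
  (θ' : (Fin r → Q) → (k : ℕ) → (Fin r → A) → (Fin k → A) → ℝ)

/-- Padding the questions to length `r` with `pref` is harmless: by no-signaling, prover 2's
answers at cutoff `j + 1` depend only on the first `j + 1` questions. -/
def simulatingStrategy (j : ℕ) (qs : Fin (j + 1) → Q) (as : Fin j → A) : A → ℝ :=
  normalizeOrUniform fun b => secondProverMarginal θ' (j + 1) (pref qs r) (Fin.snoc as b)

variable {θ'}

namespace IsNoSignalingStrategy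

lemma firstProverMarginal_eq (hθ' : IsNoSignalingStrategy r θ') {k : ℕ} (hk1 : 1 ≤ k)
    (hkr : k ≤ r) (q : Fin r → Q) (a : Fin r → A) :
    firstProverMarginal θ' q a = ∑ a' : Fin k → A, θ' q k a a' :=
  hθ'.2.2.1 q r k (hk1.trans hkr) le_rfl hk1 hkr a

lemma secondProverMarginal_congr (hθ' : IsNoSignalingStrategy r θ') {k : ℕ} (hk1 : 1 ≤ k)
    (hkr : k ≤ r) {q q' : Fin r → Q} (hq : pref q k = pref q' k) :
    secondProverMarginal θ' k q = secondProverMarginal θ' k q' :=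
  funext (hθ'.2.2.2 q q' k hk1 hkr hq)

end IsNoSignalingStrategy

lemma secondProverMarginal_nonneg (hθ' : IsNoSignalingStrategy r θ') {k : ℕ} (hk1 : 1 ≤ k)
    (hkr : k ≤ r) (q : Fin r → Q) (a' : Fin k → A) : 0 ≤ secondProverMarginal θ' k q a' :=
  sum_nonneg fun a _ => hθ'.1 q k hk1 hkr a a'

lemma consistencyError_nonneg (hθ' : IsNoSignalingStrategy r θ') {k : ℕ} (hk1 : 1 ≤ k)
    (hkr : k ≤ r) (q : Fin r → Q) : 0 ≤ consistencyError θ' k q :=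
  sum_nonneg fun a _ => sum_nonneg fun a' _ =>
    mul_nonneg (hθ'.1 q k hk1 hkr a a') (by split_ifs <;> norm_num)

lemma sum_firstProverMarginal (hθ' : IsNoSignalingStrategy r θ') (hr : 1 ≤ r)
    (q : Fin r → Q) : ∑ a, firstProverMarginal θ' q a = 1 :=
  hθ'.2.1 q r hr le_rfl

lemma sum_abs_secondProverMarginal_sub_le (hθ' : IsNoSignalingStrategy r θ') {k : ℕ}
    (hk1 : 1 ≤ k) (hkr : k ≤ r) (q : Fin r → Q) :
    ∑ as, |secondProverMarginal θ' k q as - firstProverPrefixMarginal θ' k q as|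
      ≤ 2 * consistencyError θ' k q := by
  simp only [firstProverPrefixMarginal, hθ'.firstProverMarginal_eq hk1 hkr]
  exact sum_abs_marginal_sub_map_le (hθ'.1 q k hk1 hkr) (pref · k)

lemma isSeqStrategy_simulatingStrategy (hθ' : IsNoSignalingStrategy r θ') :
    IsSeqStrategy r (simulatingStrategy θ') := fun j hj _ _ =>
  ⟨normalizeOrUniform_nonneg (fun _ => secondProverMarginal_nonneg hθ' j.succ_pos hj _ _),
    sum_normalizeOrUniform _⟩

lemma simulatingStrategy_pref (hθ' : IsNoSignalingStrategy r θ') {k : ℕ} (hk : k < r)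
    (q : Fin r → Q) (as : Fin k → A) :
    simulatingStrategy θ' k (pref q (k + 1)) as
      = normalizeOrUniform fun b => secondProverMarginal θ' (k + 1) q (Fin.snoc as b) := by
  have hpad : pref (pref (pref q (k + 1)) r) (k + 1) = pref q (k + 1) := by
    rw [pref_pref hk, pref_self]
  rw [simulatingStrategy, hθ'.secondProverMarginal_congr k.succ_pos hk hpad]

lemma sum_abs_seqPrefixJoint_succ_sub (hθ' : IsNoSignalingStrategy r θ') {k : ℕ} (hk : k < r)
    (q : Fin r → Q) :
    ∑ as, |seqPrefixJoint (simulatingStrategy θ') (k + 1) q as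
        - secondProverMarginal θ' (k + 1) q as|
      = ∑ as : Fin k → A, |seqPrefixJoint (simulatingStrategy θ') k q as
          - ∑ b, secondProverMarginal θ' (k + 1) q (Fin.snoc as b)| := by
  rw [sum_fun_fin_succ_eq_sum_snoc]
  refine sum_congr rfl fun as _ => ?_
  simp only [seqPrefixJoint_snoc, simulatingStrategy_pref hθ' hk]
  exact sum_abs_mul_normalizeOrUniform_sub
    (fun _ => secondProverMarginal_nonneg hθ' k.succ_pos hk _ _)
    (seqPrefixJoint_nonneg (isSeqStrategy_simulatingStrategy hθ') hk.le q as)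

lemma sum_abs_seqPrefixJoint_sub_firstProverPrefixMarginal_le
    (hθ' : IsNoSignalingStrategy r θ') (hr : 1 ≤ r) (q : Fin r → Q) {k : ℕ} (hk : k ≤ r) :
    ∑ as, |seqPrefixJoint (simulatingStrategy θ') k q as - firstProverPrefixMarginal θ' k q as|
      ≤ 4 * ∑ j ∈ Icc 1 k, consistencyError θ' j q := by
  induction k with
  | zero =>
    have hmass : ∑ as : Fin 0 → A, firstProverPrefixMarginal θ' 0 q as = 1 := by
      rw [sum_firstProverPrefixMarginal, sum_firstProverMarginal hθ' hr]
    simp_all [seqPrefixJoint]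
  | succ k ih =>
    set T := seqPrefixJoint (simulatingStrategy θ')
    set M := secondProverMarginal θ' (k + 1) q
    set g := firstProverPrefixMarginal θ'
    have hM : ∑ as, |M as - g (k + 1) q as| ≤ 2 * consistencyError θ' (k + 1) q :=
      sum_abs_secondProverMarginal_sub_le hθ' k.succ_pos hk q
    have hTM : ∑ as, |T (k + 1) q as - M as| ≤ ∑ as, |T k q as - g k q as|
        + 2 * consistencyError θ' (k + 1) q := by
      rw [sum_abs_seqPrefixJoint_succ_sub hθ' hk]
      refine (sum_abs_sub_le_sum_abs_sub_add _ (g k q) _).trans (add_le_add le_rfl ?_)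
      calc ∑ as : Fin k → A, |g k q as - ∑ b, M (Fin.snoc as b)|
          = ∑ as : Fin k → A, |∑ b, (M (Fin.snoc as b) - g (k + 1) q (Fin.snoc as b))| := by
            simp only [sum_sub_distrib, sum_firstProverPrefixMarginal_snoc θ' hk, g,
              abs_sub_comm]
        _ ≤ ∑ as : Fin k → A, ∑ b, |M (Fin.snoc as b) - g (k + 1) q (Fin.snoc as b)| :=
            sum_le_sum fun _ _ => abs_sum_le_sum_abs _ _
        _ ≤ 2 * consistencyError θ' (k + 1) q :=
            (sum_fun_fin_succ_eq_sum_snoc fun as => |M as - g (k + 1) q as|).symm.trans_le hM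
    rw [sum_Icc_succ_top k.succ_pos]
    linarith [sum_abs_sub_le_sum_abs_sub_add (T (k + 1) q) M (g (k + 1) q),
      ih (Nat.le_of_succ_le hk)]

lemma firstProverWin_sub_simulatedWin_le (hθ' : IsNoSignalingStrategy r θ') (hr : 1 ≤ r)
    (R : (Fin r → Q) → (Fin r → A) → Bool) (q : Fin r → Q) :
    ∑ a, firstProverMarginal θ' q a * (if R q a then 1 else 0)
      - ∑ a, seqJoint r (simulatingStrategy θ') q a * (if R q a then 1 else 0)
      ≤ 2 * ∑ k ∈ Icc 1 r, consistencyError θ' k q := by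
  have hmass : ∑ a, firstProverMarginal θ' q a = ∑ a, seqJoint r (simulatingStrategy θ') q a :=
    (sum_firstProverMarginal hθ' hr q).trans
      (sum_seqPrefixJoint (isSeqStrategy_simulatingStrategy hθ') le_rfl q).symm
  have hdist : ∑ a, |firstProverMarginal θ' q a - seqJoint r (simulatingStrategy θ') q a|
      ≤ 4 * ∑ k ∈ Icc 1 r, consistencyError θ' k q := by
    simpa [abs_sub_comm, seqJoint_eq_seqPrefixJoint] using
      sum_abs_seqPrefixJoint_sub_firstProverPrefixMarginal_le hθ' hr q le_rfl
  rw [← sum_sub_distrib]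
  simp only [← sub_mul]
  linarith [sum_sub_mul_indicator_le_half_sum_abs_sub hmass fun a => R q a = true]

lemma acceptProb_add_consistencyError_le (hθ' : IsNoSignalingStrategy r θ') {k : ℕ}
    (hk1 : 1 ≤ k) (hkr : k ≤ r) (R : (Fin r → Q) → (Fin r → A) → Bool) (q : Fin r → Q) :
    acceptProb θ' R k q + consistencyError θ' k q ≤ 1 := by
  rw [acceptProb, consistencyError, ← sum_add_distrib]
  refine (sum_le_sum fun a _ => ?_).trans_eq (hθ'.2.1 q k hk1 hkr)
  rw [← sum_add_distrib]
  refine sum_le_sum fun a' _ => ?_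
  rw [consistentPrefix_iff hkr, ← mul_add]
  refine mul_le_of_le_one_right (hθ'.1 q k hk1 hkr a a') ?_
  by_cases h : pref a k = a' <;> by_cases hR : R q a = true <;> simp [h, hR]

lemma acceptProb_le_firstProverWin (hθ' : IsNoSignalingStrategy r θ') {k : ℕ}
    (hk1 : 1 ≤ k) (hkr : k ≤ r) (R : (Fin r → Q) → (Fin r → A) → Bool) (q : Fin r → Q) :
    acceptProb θ' R k q ≤ ∑ a, firstProverMarginal θ' q a * (if R q a then 1 else 0) := by
  simp only [acceptProb, hθ'.firstProverMarginal_eq hk1 hkr, sum_mul]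
  refine sum_le_sum fun a _ => sum_le_sum fun a' _ => ?_
  refine mul_le_mul_of_nonneg_left ?_ (hθ'.1 q k hk1 hkr a a')
  split_ifs <;> simp_all

lemma one_sub_simulatedWin_le (hθ' : IsNoSignalingStrategy r θ') (hr : 1 ≤ r)
    (R : (Fin r → Q) → (Fin r → A) → Bool) (q : Fin r → Q) :
    1 - ∑ a, seqJoint r (simulatingStrategy θ') q a * (if R q a then 1 else 0)
      ≤ 3 * ∑ k ∈ Icc 1 r, (1 - acceptProb θ' R k q) := by
  have herr : ∀ k ∈ Icc 1 r, 0 ≤ consistencyError θ' k q ∧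
      consistencyError θ' k q ≤ 1 - acceptProb θ' R k q := fun k hk => by
    obtain ⟨hk1, hkr⟩ := mem_Icc.mp hk
    exact ⟨consistencyError_nonneg hθ' hk1 hkr q,
      by linarith [acceptProb_add_consistencyError_le hθ' hk1 hkr R q]⟩
  have hrej : 1 - acceptProb θ' R 1 q ≤ ∑ k ∈ Icc 1 r, (1 - acceptProb θ' R k q) :=
    single_le_sum (fun k hk => (herr k hk).1.trans (herr k hk).2) (mem_Icc.mpr ⟨le_rfl, hr⟩)
  linarith [acceptProb_le_firstProverWin hθ' le_rfl hr R q, sum_le_sum fun k hk => (herr k hk).2,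
    firstProverWin_sub_simulatedWin_le hθ' hr R q]

lemma one_sub_seqWinProb_simulatingStrategy_le {π : (Fin r → Q) → ℝ} (hπ0 : ∀ q, 0 ≤ π q)
    (hπ1 : ∑ q, π q = 1) (R : (Fin r → Q) → (Fin r → A) → Bool)
    (hθ' : IsNoSignalingStrategy r θ') (hr : 1 ≤ r) :
    1 - seqWinProb r π R (simulatingStrategy θ') ≤ 3 * r * (1 - oracWinProb r π R θ') := by
  have horac :
      oracWinProb r π R θ' = 1 / r * ∑ k ∈ Icc 1 r, ∑ q, π q * acceptProb θ' R k q :=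
    rfl
  calc 1 - seqWinProb r π R (simulatingStrategy θ')
      = ∑ q, π q *
          (1 - ∑ a, seqJoint r (simulatingStrategy θ') q a * (if R q a then 1 else 0)) := by
        simp only [seqWinProb, mul_sub, mul_one, sum_sub_distrib, hπ1]
    _ ≤ ∑ q, π q * (3 * ∑ k ∈ Icc 1 r, (1 - acceptProb θ' R k q)) :=
        sum_le_sum fun q _ =>
          mul_le_mul_of_nonneg_left (one_sub_simulatedWin_le hθ' hr R q) (hπ0 q)
    _ = 3 * ∑ k ∈ Icc 1 r, ∑ q, π q * (1 - acceptProb θ' R k q) := by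
        simp only [mul_sum]
        rw [sum_comm]
        exact sum_congr rfl fun _ _ => sum_congr rfl fun _ _ => by ring
    _ = 3 * (r - ∑ k ∈ Icc 1 r, ∑ q, π q * acceptProb θ' R k q) := by
        simp [mul_sub, sum_sub_distrib, hπ1]
    _ = 3 * r * (1 - oracWinProb r π R θ') := by
        rw [horac]
        field_simp

end NoSignaling

/-- Lemma `wns`.  If `G'` is the oracularization of a nonadaptive-query
single-prover `r`-round game `G`, then every no-signaling strategy of `G'` wins with
probability at most `1 − (1 − w(G))/(3r)`; hence `w_ns(G') ≤ 1 − (1 − w(G))/(3r)`. -/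
theorem oracularization_no_signaling_value_bound
    {Q A : Type*} [Fintype Q] [Fintype A] [Nonempty Q] [Nonempty A]
    (r : ℕ) (hr : 1 ≤ r)
    (π : (Fin r → Q) → ℝ) (R : (Fin r → Q) → (Fin r → A) → Bool)
    (hπ0 : ∀ q, 0 ≤ π q) (hπ1 : ∑ q, π q = 1)
    (θ' : (Fin r → Q) → (k : ℕ) → (Fin r → A) → (Fin k → A) → ℝ)
    (hθ' : IsNoSignalingStrategy r θ') :
    oracWinProb r π R θ' ≤ 1 - (1 - seqGameValue r π R) / (3 * r) := by
  have hvalue := seqWinProb_le_seqGameValue hπ0 hπ1 R (isSeqStrategy_simulatingStrategy hθ')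
  have hloss := one_sub_seqWinProb_simulatingStrategy_le hπ0 hπ1 R hθ' hr
  have h3r : (0 : ℝ) < 3 * r := by positivity
  rw [le_sub_comm, div_le_iff₀ h3r]
  linarith

end
end

section
/- Let H be a complex Hilbert space, A a finite nonempty set, and let {M_a}_{a∈A} and {N_a}_{a∈A} be POVMs on H (families of positive bounded operators with Σ_a M_a = I and Σ_a N_a = I) such that M_a N_b = N_b M_a for all a, b ∈ A. Let φ ∈ H be a unit vector. In the Hilbert space direct sum ⊕_{a∈A} H define ψ = (√(M_a) φ)_{a∈A} and ξ = (√(N_a) φ)_{a∈A}, where √ denotes the positive square root of a positive operator. Let p = 1 − Σ_{a∈A} ⟨φ, M_a N_a φ⟩. Then ψ and ξ are unit vectors, ⟨ψ, ξ⟩ = Σ_a ⟨√(M_a) φ, √(N_a) φ⟩ is a nonnegative real number, and 1 − ⟨ψ, ξ⟩² ≤ 2(1 − ⟨ψ, ξ⟩) ≤ 2p. In particular D(ψ, ξ)² ≤ 2p. -/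
open scoped ComplexInnerProductSpace

/-- `D(u, v) = √(1 − |⟨u, v⟩|²)` for families `(u_a)`, `(v_a)` of vectors, viewed as vectors of
the Hilbert space direct sum `⊕_a H` (whose inner product is `Σ_a ⟪u_a, v_a⟫`). -/
noncomputable def tdistFam {H : Type*} [NormedAddCommGroup H] [InnerProductSpace ℂ H]
    {S : Type*} [Fintype S] (u v : S → H) : ℝ :=
  Real.sqrt (1 - ‖∑ s, ⟪u s, v s⟫‖ ^ 2)

/-!
Write `X_a = √M_a` and `Z_a = √N_a`. Square roots are continuous functions of their squares, so
`X_a` and `Z_a` commute, and `T_a = X_a Z_a` is a positive contraction. Hence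
`M_a N_a = T_a² ≤ T_a`, which gives `⟨φ, M_a N_a φ⟩ ≤ ⟨φ, T_a φ⟩ = ⟨X_a φ, Z_a φ⟩`, every term
being a nonnegative real. Summing over `a` yields `1 - p ≤ ⟨ψ, ξ⟩`, Cauchy–Schwarz in `⊕_a H`
yields `⟨ψ, ξ⟩ ≤ 1`, and the remaining inequality is `(1 - ⟨ψ, ξ⟩)² ≥ 0`.
-/

open scoped ComplexOrder InnerProductSpace

section CStarAlgebra

variable {A : Type*} [CStarAlgebra A] [PartialOrder A] [StarOrderedRing A]

lemma Commute.of_sq_left {x b : A} (hx : 0 ≤ x) (h : Commute (x ^ 2) b) : Commute x b := by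
  rw [← CFC.sqrt_sq x, CFC.sqrt_eq_cfc]
  exact h.cfc_nnreal _

lemma le_one_of_sq_le_one {x : A} (hx : 0 ≤ x) (h : x ^ 2 ≤ 1) : x ≤ 1 := by
  simpa [CFC.sqrt_sq x] using CFC.sqrt_le_sqrt _ _ h

lemma le_one_of_sum_sq_eq_one {ι : Type*} [Fintype ι] {x : ι → A} (hx : ∀ i, 0 ≤ x i)
    (hsum : ∑ i, x i ^ 2 = 1) (i : ι) : x i ≤ 1 :=
  le_one_of_sq_le_one (hx i) <| hsum ▸
    Finset.single_le_sum (fun j _ ↦ (hx j).isSelfAdjoint.sq_nonneg) (Finset.mem_univ i)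

lemma Commute.mul_le_of_le_one_right {a b : A} (h : Commute a b) (ha : 0 ≤ a) (hb : b ≤ 1) :
    a * b ≤ a := by
  simpa [mul_sub] using ((Commute.one_right a).sub_right h).mul_nonneg ha (sub_nonneg.mpr hb)

lemma Commute.sq_mul_sq_le_mul {a b : A} (h : Commute a b) (ha₀ : 0 ≤ a) (ha₁ : a ≤ 1)
    (hb₀ : 0 ≤ b) (hb₁ : b ≤ 1) : a ^ 2 * b ^ 2 ≤ a * b := by
  have hab₀ : 0 ≤ a * b := h.mul_nonneg ha₀ hb₀
  have hab₁ : a * b ≤ 1 := (h.mul_le_of_le_one_right ha₀ hb₁).trans ha₁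
  rw [sq, sq, h.mul_mul_mul_comm]
  exact (Commute.refl (a * b)).mul_le_of_le_one_right hab₀ hab₁

end CStarAlgebra

section InnerProductSpace

variable {𝕜 E : Type*} [RCLike 𝕜] [NormedAddCommGroup E] [InnerProductSpace 𝕜 E]

lemma norm_sum_inner_le {ι : Type*} [Fintype ι] (u v : ι → E) :
    ‖∑ i, ⟪u i, v i⟫_𝕜‖ ≤ √(∑ i, ‖u i‖ ^ 2) * √(∑ i, ‖v i‖ ^ 2) := by
  simpa [PiLp.inner_apply, PiLp.norm_eq_of_L2] using
    norm_inner_le_norm (𝕜 := 𝕜) (WithLp.toLp 2 u : PiLp 2 fun _ ↦ E) (WithLp.toLp 2 v)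

lemma ContinuousLinearMap.inner_apply_le_inner_apply {S T : E →L[𝕜] E} (h : S ≤ T) (x : E) :
    ⟪x, S x⟫_𝕜 ≤ ⟪x, T x⟫_𝕜 := by
  simpa [inner_sub_right] using (h : (T - S).IsPositive).inner_nonneg_right x

variable [CompleteSpace E]

lemma IsSelfAdjoint.norm_sq_apply {T : E →L[𝕜] E} (hT : IsSelfAdjoint T) (x : E) :
    ‖T x‖ ^ 2 = RCLike.re ⟪x, (T ^ 2) x⟫_𝕜 := by
  rw [ContinuousLinearMap.apply_norm_sq_eq_inner_adjoint_right, hT.adjoint_eq, sq]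
  rfl

lemma ContinuousLinearMap.sum_norm_sq_apply_of_sum_sq_eq_one {ι : Type*} [Fintype ι]
    {T : ι → E →L[𝕜] E} (hT : ∀ i, IsSelfAdjoint (T i)) (hsum : ∑ i, T i ^ 2 = 1) (x : E) :
    ∑ i, ‖T i x‖ ^ 2 = ‖x‖ ^ 2 := by
  simp_rw [fun i ↦ (hT i).norm_sq_apply x]
  rw [← map_sum, ← inner_sum, ← sum_apply, hsum, one_apply_eq_self, inner_self_eq_norm_sq]

end InnerProductSpace

section Operator

variable {H : Type*} [NormedAddCommGroup H] [InnerProductSpace ℂ H] [CompleteSpace H]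

open ContinuousLinearMap

lemma Commute.inner_apply_nonneg {x z : H →L[ℂ] H} (h : Commute x z) (hx : 0 ≤ x) (hz : 0 ≤ z)
    (φ : H) : 0 ≤ ⟪x φ, z φ⟫ := by
  rw [((nonneg_iff_isPositive x).mp hx).inner_left_eq_inner_right]
  exact ((nonneg_iff_isPositive _).mp (h.mul_nonneg hx hz)).inner_nonneg_right φ

lemma Commute.inner_sq_mul_sq_apply_le {x z : H →L[ℂ] H} (h : Commute x z) (hx₀ : 0 ≤ x)
    (hx₁ : x ≤ 1) (hz₀ : 0 ≤ z) (hz₁ : z ≤ 1) (φ : H) :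
    ⟪φ, (x ^ 2 * z ^ 2) φ⟫ ≤ ⟪x φ, z φ⟫ := by
  rw [((nonneg_iff_isPositive x).mp hx₀).inner_left_eq_inner_right]
  exact inner_apply_le_inner_apply (h.sq_mul_sq_le_mul hx₀ hx₁ hz₀ hz₁) φ

end Operator

lemma tdistFam_sq {H : Type*} [NormedAddCommGroup H] [InnerProductSpace ℂ H] {S : Type*}
    [Fintype S] {u v : S → H} (h : ‖∑ s, ⟪u s, v s⟫‖ ≤ 1) :
    tdistFam u v ^ 2 = 1 - ‖∑ s, ⟪u s, v s⟫‖ ^ 2 :=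
  Real.sq_sqrt <| sub_nonneg.mpr <| pow_le_one₀ (norm_nonneg _) h

theorem sqrt_povm_closeness_general {H : Type*} [NormedAddCommGroup H] [InnerProductSpace ℂ H]
    [CompleteSpace H] {A : Type*} [Fintype A]
    (M N : A → (H →L[ℂ] H))
    (hMsum : ∑ a, M a = 1) (hNsum : ∑ a, N a = 1)
    (hMN : ∀ a b, M a * N b = N b * M a)
    (X Z : A → (H →L[ℂ] H))
    (hX : ∀ a, (X a).IsPositive ∧ X a ^ 2 = M a)
    (hZ : ∀ a, (Z a).IsPositive ∧ Z a ^ 2 = N a)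
    (φ : H) (hφ : ‖φ‖ = 1)
    (p : ℝ) (hp : p = 1 - (∑ a, ⟪φ, (M a * N a) φ⟫).re) :
    (∑ a, ‖(X a) φ‖ ^ 2 = 1) ∧ (∑ a, ‖(Z a) φ‖ ^ 2 = 1) ∧
    (∑ a, ⟪(X a) φ, (Z a) φ⟫).im = 0 ∧ 0 ≤ (∑ a, ⟪(X a) φ, (Z a) φ⟫).re ∧
    1 - (∑ a, ⟪(X a) φ, (Z a) φ⟫).re ^ 2 ≤ 2 * (1 - (∑ a, ⟪(X a) φ, (Z a) φ⟫).re) ∧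
    2 * (1 - (∑ a, ⟪(X a) φ, (Z a) φ⟫).re) ≤ 2 * p ∧
    tdistFam (fun a => (X a) φ) (fun a => (Z a) φ) ^ 2 ≤ 2 * p := by
  have hX₀ a : 0 ≤ X a := (ContinuousLinearMap.nonneg_iff_isPositive _).mpr (hX a).1
  have hZ₀ a : 0 ≤ Z a := (ContinuousLinearMap.nonneg_iff_isPositive _).mpr (hZ a).1
  have hXsum : ∑ a, X a ^ 2 = 1 := by simpa only [(hX _).2] using hMsum
  have hZsum : ∑ a, Z a ^ 2 = 1 := by simpa only [(hZ _).2] using hNsum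
  have hXZ a : Commute (X a) (Z a) := .of_sq_left (hX₀ a) <| .symm <| .of_sq_left (hZ₀ a) <| by
    rw [(hX a).2, (hZ a).2]; exact (hMN a a).symm
  have hψ : ∑ a, ‖X a φ‖ ^ 2 = 1 := by
    rw [ContinuousLinearMap.sum_norm_sq_apply_of_sum_sq_eq_one
      (fun a ↦ (hX a).1.isSelfAdjoint) hXsum, hφ, one_pow]
  have hξ : ∑ a, ‖Z a φ‖ ^ 2 = 1 := by
    rw [ContinuousLinearMap.sum_norm_sq_apply_of_sum_sq_eq_one
      (fun a ↦ (hZ a).1.isSelfAdjoint) hZsum, hφ, one_pow]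
  set s := ∑ a, ⟪X a φ, Z a φ⟫
  have hs₀ : 0 ≤ s := Finset.sum_nonneg fun a _ ↦ (hXZ a).inner_apply_nonneg (hX₀ a) (hZ₀ a) φ
  have hs₁ : ‖s‖ ≤ 1 := by
    simpa [hψ, hξ] using norm_sum_inner_le (𝕜 := ℂ) (fun a ↦ X a φ) (fun a ↦ Z a φ)
  have hMNs : ∑ a, ⟪φ, (M a * N a) φ⟫ ≤ s := Finset.sum_le_sum fun a _ ↦ by
    rw [← (hX a).2, ← (hZ a).2]
    exact (hXZ a).inner_sq_mul_sq_apply_le (hX₀ a) (le_one_of_sum_sq_eq_one hX₀ hXsum a)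
      (hZ₀ a) (le_one_of_sum_sq_eq_one hZ₀ hZsum a) φ
  obtain ⟨hs_re, hs_im⟩ := Complex.nonneg_iff.mp hs₀
  have hs_norm : ‖s‖ = s.re := by
    rw [← Complex.abs_re_eq_norm.mpr hs_im.symm, abs_of_nonneg hs_re]
  have hsp : 1 - s.re ≤ p := hp ▸ by linarith [(Complex.le_def.mp hMNs).1]
  refine ⟨hψ, hξ, hs_im.symm, hs_re, by nlinarith [sq_nonneg (1 - s.re)], by linarith, ?_⟩
  rw [tdistFam_sq hs₁, hs_norm]
  nlinarith

/-- Let `{M_a}` and `{N_a}` be mutually commuting POVMs on `H`, `φ` a unit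
vector, and `ψ = (√M_a φ)_a`, `ξ = (√N_a φ)_a` in `⊕_a H` (here `X a = √(M a)`, `Z a = √(N a)`
are the positive square roots).  With `p = 1 − Σ_a ⟨φ, M_a N_a φ⟩`, the vectors `ψ, ξ` are unit
vectors, `⟨ψ, ξ⟩ = Σ_a ⟨√M_a φ, √N_a φ⟩` is a nonnegative real, and
`1 − ⟨ψ,ξ⟩² ≤ 2(1 − ⟨ψ,ξ⟩) ≤ 2p`; in particular `D(ψ, ξ)² ≤ 2p`. -/
theorem sqrt_povm_closeness {H : Type*} [NormedAddCommGroup H] [InnerProductSpace ℂ H]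
    [CompleteSpace H] {A : Type*} [Fintype A] [Nonempty A]
    (M N : A → (H →L[ℂ] H))
    (hMpos : ∀ a, (M a).IsPositive) (hNpos : ∀ a, (N a).IsPositive)
    (hMsum : ∑ a, M a = 1) (hNsum : ∑ a, N a = 1)
    (hMN : ∀ a b, M a * N b = N b * M a)
    (X Z : A → (H →L[ℂ] H))
    (hX : ∀ a, (X a).IsPositive ∧ X a ^ 2 = M a)
    (hZ : ∀ a, (Z a).IsPositive ∧ Z a ^ 2 = N a)
    (φ : H) (hφ : ‖φ‖ = 1)
    (p : ℝ) (hp : p = 1 - (∑ a, ⟪φ, (M a * N a) φ⟫).re) :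
    (∑ a, ‖(X a) φ‖ ^ 2 = 1) ∧ (∑ a, ‖(Z a) φ‖ ^ 2 = 1) ∧
    (∑ a, ⟪(X a) φ, (Z a) φ⟫).im = 0 ∧ 0 ≤ (∑ a, ⟪(X a) φ, (Z a) φ⟫).re ∧
    1 - (∑ a, ⟪(X a) φ, (Z a) φ⟫).re ^ 2 ≤ 2 * (1 - (∑ a, ⟪(X a) φ, (Z a) φ⟫).re) ∧
    2 * (1 - (∑ a, ⟪(X a) φ, (Z a) φ⟫).re) ≤ 2 * p ∧
    tdistFam (fun a => (X a) φ) (fun a => (Z a) φ) ^ 2 ≤ 2 * p :=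
  sqrt_povm_closeness_general M N hMsum hNsum hMN X Z hX hZ φ hφ p hp
end

section
/- Let H be a complex Hilbert space, Ψ ∈ H a unit vector, and A a finite nonempty set. Let {N^{a_1 a_2}}_{(a_1,a_2)∈A×A} be a PVM on H (pairwise orthogonal self-adjoint projections summing to the identity), and let P_1^{a_1} = Σ_{a_2} N^{a_1 a_2} and P_2^{a_2} = Σ_{a_1} N^{a_1 a_2} be its marginal projections. Let {X^a}_{a∈A} and {Y^a}_{a∈A} be families of positive bounded operators with Σ_a (X^a)² = I and Σ_a (Y^a)² = I, such that every X^a and every Y^a commutes with every N^{a_1 a_2}. Then D( (Y^{a_2} X^{a_1} Ψ)_{(a_1,a_2)}, (X^{a_1} Y^{a_2} Ψ)_{(a_1,a_2)} ) ≤ 2 [ D( (X^a Ψ)_{a}, (P_1^a Ψ)_{a} ) + D( (Y^a Ψ)_{a}, (P_2^a Ψ)_{a} ) ], where the first distance is taken in ⊕_{(a_1,a_2)∈A×A} H and the latter two in ⊕_{a∈A} H. -/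
open scoped ComplexInnerProductSpace

/-!
`D(u, v) = √(1 - |⟪u, v⟫|²)` is the sine of the angle between the rays of `u` and `v`, hence
satisfies the triangle inequality on unit vectors. Walk from `(Y^b X^a Ψ)` to `(X^a Y^b Ψ)` through
`(Y^b P₁^a Ψ)`, `(N^{ab} Ψ)` and `(X^a P₂^b Ψ)`. Since `x ↦ (Y^b x)_b` is an isometry, the first
step costs `D((X^a Ψ), (P₁^a Ψ))`; since `Y^b` commutes with `P₁^a` and `P₁^a N^{ab} = N^{ab}`, the
second costs `D((Y^b Ψ), (P₂^b Ψ))`; the last two steps are the mirror images of the first two.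
-/

open scoped InnerProductSpace

section Geometry

variable {𝕜 E : Type*} [RCLike 𝕜] [NormedAddCommGroup E] [InnerProductSpace 𝕜 E]

/- With `a = cos α`, `s = sin α`, `b = cos β`, `t = sin β`: if `cos (α + β) ≤ c`, then
`√(1 - c²) ≤ sin α + sin β`. -/
lemma one_sub_sq_le_add_sq_of_mul_sub_mul_le {a b c s t : ℝ} (ha : 0 ≤ a) (hb : 0 ≤ b)
    (hs : 0 ≤ s) (ht : 0 ≤ t) (has : a ^ 2 + s ^ 2 = 1) (hbt : b ^ 2 + t ^ 2 = 1)
    (h : a * b - s * t ≤ c) : 1 - c ^ 2 ≤ (s + t) ^ 2 := by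
  rcases le_or_gt (a * b) (s * t) with hle | hlt
  · have : a ^ 2 + b ^ 2 ≤ 1 := by
      nlinarith [mul_le_mul hle hle (mul_nonneg ha hb) (mul_nonneg hs ht)]
    nlinarith [mul_nonneg hs ht]
  · have hsq : (a * b - s * t) ^ 2 ≤ c ^ 2 := pow_le_pow_left₀ (by linarith) h 2
    have hid : (a * b - s * t) ^ 2 + (s * b + a * t) ^ 2 = 1 := by
      linear_combination (b ^ 2 + t ^ 2) * has + hbt
    have ha1 : a ≤ 1 := by nlinarith
    have hb1 : b ≤ 1 := by nlinarith
    have hmono : s * b + a * t ≤ s + t := by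
      nlinarith [mul_le_mul_of_nonneg_left hb1 hs, mul_le_mul_of_nonneg_left ha1 ht]
    nlinarith [mul_nonneg hs hb, mul_nonneg ha ht]

lemma norm_sub_inner_smul_sq {w : E} (hw : ‖w‖ = 1) (x : E) :
    ‖x - ⟪w, x⟫_𝕜 • w‖ ^ 2 = ‖x‖ ^ 2 - ‖⟪w, x⟫_𝕜‖ ^ 2 := by
  have hww : ⟪w, w⟫_𝕜 = 1 := by simp [inner_self_eq_norm_sq_to_K, hw]
  have horth : ⟪⟪w, x⟫_𝕜 • w, x - ⟪w, x⟫_𝕜 • w⟫_𝕜 = 0 := by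
    simp only [inner_sub_right, inner_smul_left, inner_smul_right, hww]
    ring
  have hpyth := norm_add_sq_eq_norm_sq_add_norm_sq_of_inner_eq_zero _ _ horth
  rw [add_sub_cancel, norm_smul, hw, mul_one] at hpyth
  nlinarith

lemma inner_eq_inner_mul_inner_add_inner_sub_inner_smul {w : E} (hw : ‖w‖ = 1) (u v : E) :
    ⟪u, v⟫_𝕜 = ⟪u, w⟫_𝕜 * ⟪w, v⟫_𝕜 + ⟪u - ⟪w, u⟫_𝕜 • w, v - ⟪w, v⟫_𝕜 • w⟫_𝕜 := by
  have hww : ⟪w, w⟫_𝕜 = 1 := by simp [inner_self_eq_norm_sq_to_K, hw]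
  simp only [inner_sub_left, inner_sub_right, inner_smul_left, inner_smul_right, hww,
    inner_conj_symm]
  ring

/- Projecting `u` and `v` onto the orthogonal complement of `w` gives
`|⟪u, v⟫| ≥ |⟪u, w⟫| |⟪w, v⟫| - D(u, w) D(w, v)`. -/
theorem sqrt_one_sub_norm_inner_sq_triangle {u v w : E} (hu : ‖u‖ = 1) (hv : ‖v‖ = 1)
    (hw : ‖w‖ = 1) :
    √(1 - ‖⟪u, v⟫_𝕜‖ ^ 2) ≤ √(1 - ‖⟪u, w⟫_𝕜‖ ^ 2) + √(1 - ‖⟪w, v⟫_𝕜‖ ^ 2) := by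
  set u' := u - ⟪w, u⟫_𝕜 • w
  set v' := v - ⟪w, v⟫_𝕜 • w
  have hu' : ‖⟪u, w⟫_𝕜‖ ^ 2 + ‖u'‖ ^ 2 = 1 := by
    rw [norm_sub_inner_smul_sq hw, hu, norm_inner_symm]; ring
  have hv' : ‖⟪w, v⟫_𝕜‖ ^ 2 + ‖v'‖ ^ 2 = 1 := by
    rw [norm_sub_inner_smul_sq hw, hv]; ring
  have hlower : ‖⟪u, w⟫_𝕜‖ * ‖⟪w, v⟫_𝕜‖ - ‖u'‖ * ‖v'‖ ≤ ‖⟪u, v⟫_𝕜‖ := by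
    have hcross := norm_sub_norm_le (⟪u, w⟫_𝕜 * ⟪w, v⟫_𝕜) (-⟪u', v'⟫_𝕜)
    rw [norm_neg, sub_neg_eq_add, norm_mul,
      ← inner_eq_inner_mul_inner_add_inner_sub_inner_smul hw] at hcross
    linarith [norm_inner_le_norm (𝕜 := 𝕜) u' v']
  rw [← eq_sub_of_add_eq' hu', ← eq_sub_of_add_eq' hv', Real.sqrt_sq (norm_nonneg _),
    Real.sqrt_sq (norm_nonneg _), Real.sqrt_le_left (by positivity)]
  exact one_sub_sq_le_add_sq_of_mul_sub_mul_le (norm_nonneg _) (norm_nonneg _) (norm_nonneg _)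
    (norm_nonneg _) hu' hv' hlower

end Geometry

section Families

variable {H : Type*} [NormedAddCommGroup H] [InnerProductSpace ℂ H] {S : Type*} [Fintype S]

lemma tdistFam_comm (u v : S → H) : tdistFam u v = tdistFam v u := by
  rw [tdistFam, tdistFam, ← RCLike.norm_conj, map_sum]
  simp only [inner_conj_symm]

theorem tdistFam_triangle {u v w : S → H} (hu : ∑ s, ‖u s‖ ^ 2 = 1) (hv : ∑ s, ‖v s‖ ^ 2 = 1)
    (hw : ∑ s, ‖w s‖ ^ 2 = 1) : tdistFam u v ≤ tdistFam u w + tdistFam w v := by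
  have hunit {x : S → H} (hx : ∑ s, ‖x s‖ ^ 2 = 1) : ‖WithLp.toLp 2 x‖ = 1 := by
    rwa [← pow_eq_one_iff_of_nonneg (norm_nonneg _) two_ne_zero, PiLp.norm_sq_eq_of_L2]
  simpa only [tdistFam, PiLp.inner_apply, PiLp.toLp_apply] using
    sqrt_one_sub_norm_inner_sq_triangle (𝕜 := ℂ) (hunit hu) (hunit hv) (hunit hw)

end Families

section Isometries

variable {𝕜 E : Type*} [RCLike 𝕜] [NormedAddCommGroup E] [InnerProductSpace 𝕜 E] [CompleteSpace E]
  {ι κ : Type*} [Fintype ι] [Fintype κ] {T : κ → E →L[𝕜] E}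

lemma sum_inner_apply_apply (hT : ∑ k, star (T k) * T k = 1) (x y : E) :
    ∑ k, ⟪T k x, T k y⟫_𝕜 = ⟪x, y⟫_𝕜 := by
  simp only [← ContinuousLinearMap.adjoint_inner_right, ← mul_apply_eq_comp,
    ← ContinuousLinearMap.star_eq_adjoint, ← inner_sum, ← sum_apply, hT,
    one_apply_eq_self]

lemma sum_norm_apply_sq (hT : ∑ k, star (T k) * T k = 1) (x : E) :
    ∑ k, ‖T k x‖ ^ 2 = ‖x‖ ^ 2 := by
  have := sum_inner_apply_apply hT x x
  simp only [inner_self_eq_norm_sq_to_K] at this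
  exact_mod_cast this

lemma sum_norm_apply_sq_eq_one (hT : ∑ k, star (T k) * T k = 1) {x : E} (hx : ‖x‖ = 1) :
    ∑ k, ‖T k x‖ ^ 2 = 1 := by
  rw [sum_norm_apply_sq hT, hx, one_pow]

lemma sum_prod_inner_apply_snd (hT : ∑ k, star (T k) * T k = 1) (x y : ι → E) :
    ∑ p : ι × κ, ⟪T p.2 (x p.1), T p.2 (y p.1)⟫_𝕜 = ∑ i, ⟪x i, y i⟫_𝕜 := by
  rw [Fintype.sum_prod_type]
  exact Finset.sum_congr rfl fun i _ => sum_inner_apply_apply hT (x i) (y i)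

lemma sum_prod_inner_apply_fst (hT : ∑ k, star (T k) * T k = 1) (x y : ι → E) :
    ∑ p : κ × ι, ⟪T p.1 (x p.2), T p.1 (y p.2)⟫_𝕜 = ∑ i, ⟪x i, y i⟫_𝕜 := by
  rw [Fintype.sum_prod_type_right]
  exact Finset.sum_congr rfl fun i _ => sum_inner_apply_apply hT (x i) (y i)

lemma sum_prod_norm_apply_snd_sq (hT : ∑ k, star (T k) * T k = 1) (x : ι → E) :
    ∑ p : ι × κ, ‖T p.2 (x p.1)‖ ^ 2 = ∑ i, ‖x i‖ ^ 2 := by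
  rw [Fintype.sum_prod_type]
  exact Finset.sum_congr rfl fun i _ => sum_norm_apply_sq hT (x i)

lemma sum_prod_norm_apply_fst_sq (hT : ∑ k, star (T k) * T k = 1) (x : ι → E) :
    ∑ p : κ × ι, ‖T p.1 (x p.2)‖ ^ 2 = ∑ i, ‖x i‖ ^ 2 := by
  rw [Fintype.sum_prod_type_right]
  exact Finset.sum_congr rfl fun i _ => sum_norm_apply_sq hT (x i)

lemma inner_apply_apply_eq_of_commute {P Y M : E →L[𝕜] E} (hP : IsSelfAdjoint P)
    (hYP : Commute Y P) (hPM : P * M = M) (x : E) : ⟪Y (P x), M x⟫_𝕜 = ⟪Y x, M x⟫_𝕜 := by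
  rw [← mul_apply_eq_comp, hYP.eq, mul_apply_eq_comp, hP.isSymmetric.apply_clm,
    ← mul_apply_eq_comp, hPM]

end Isometries

section PVM

variable {R ι : Type*} [Semiring R] [StarRing R] [Fintype ι]

structure IsPVM (P : ι → R) : Prop where
  isStarProjection : ∀ i, IsStarProjection (P i)
  mul_eq_zero : Pairwise fun i j => P i * P j = 0
  sum_eq_one : ∑ i, P i = 1

namespace IsPVM

variable {P : ι → R}

lemma sum_star_mul_self (hP : IsPVM P) : ∑ i, star (P i) * P i = 1 := by
  simp only [(hP.isStarProjection _).isSelfAdjoint.star_eq,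
    (hP.isStarProjection _).isIdempotentElem.eq, hP.sum_eq_one]

lemma comp_equiv {κ : Type*} [Fintype κ] (hP : IsPVM P) (e : κ ≃ ι) : IsPVM (P ∘ e) where
  isStarProjection k := hP.isStarProjection (e k)
  mul_eq_zero _ _ hkl := hP.mul_eq_zero (e.injective.ne hkl)
  sum_eq_one := by rw [← hP.sum_eq_one]; exact e.sum_comp P

variable {A B : Type*} [Fintype A] [Fintype B] {N : A × B → R}

lemma marginal_fst_mul (hN : IsPVM N) (a : A) (b : B) :
    (∑ b', N (a, b')) * N (a, b) = N (a, b) := by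
  rw [Finset.sum_mul, Finset.sum_eq_single b, (hN.isStarProjection _).isIdempotentElem.eq]
  · exact fun b' _ hb' => hN.mul_eq_zero (by simpa using hb')
  · simp

lemma marginal_fst (hN : IsPVM N) : IsPVM fun a => ∑ b, N (a, b) where
  isStarProjection a :=
    { isIdempotentElem := by
        rw [IsIdempotentElem, Finset.mul_sum]
        exact Finset.sum_congr rfl fun b _ => hN.marginal_fst_mul a b
      isSelfAdjoint := by
        rw [IsSelfAdjoint, star_sum]
        exact Finset.sum_congr rfl fun b _ => (hN.isStarProjection _).isSelfAdjoint }
  mul_eq_zero a a' haa' := by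
    simp only [Finset.sum_mul_sum]
    exact Finset.sum_eq_zero fun b _ => Finset.sum_eq_zero fun b' _ =>
      hN.mul_eq_zero (ne_of_apply_ne Prod.fst haa')
  sum_eq_one := by rw [← Fintype.sum_prod_type', hN.sum_eq_one]

lemma marginal_snd (hN : IsPVM N) : IsPVM fun b => ∑ a, N (a, b) :=
  (hN.comp_equiv (Equiv.prodComm B A)).marginal_fst

lemma marginal_snd_mul (hN : IsPVM N) (a : A) (b : B) :
    (∑ a', N (a', b)) * N (a, b) = N (a, b) :=
  (hN.comp_equiv (Equiv.prodComm B A)).marginal_fst_mul b a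

end IsPVM

end PVM

section AlmostCommuting

variable {H : Type*} [NormedAddCommGroup H] [InnerProductSpace ℂ H] [CompleteSpace H]
  {A B : Type*} [Fintype A] [Fintype B] {N : A × B → H →L[ℂ] H}

lemma tdistFam_prod_apply_snd {Y : B → H →L[ℂ] H} (hY : ∑ b, star (Y b) * Y b = 1)
    (x y : A → H) :
    tdistFam (fun p : A × B => Y p.2 (x p.1)) (fun p => Y p.2 (y p.1)) = tdistFam x y := by
  rw [tdistFam, tdistFam, sum_prod_inner_apply_snd hY]

lemma tdistFam_prod_apply_fst {X : A → H →L[ℂ] H} (hX : ∑ a, star (X a) * X a = 1)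
    (x y : B → H) :
    tdistFam (fun p : A × B => X p.1 (x p.2)) (fun p => X p.1 (y p.2)) = tdistFam x y := by
  rw [tdistFam, tdistFam, sum_prod_inner_apply_fst hX]

lemma IsPVM.tdistFam_apply_marginal_fst {Y : B → H →L[ℂ] H} (hN : IsPVM N)
    (hYN : ∀ b p, Commute (Y b) (N p)) (x : H) :
    tdistFam (fun p : A × B => Y p.2 ((∑ b, N (p.1, b)) x)) (fun p => N p x) =
      tdistFam (fun b => Y b x) (fun b => (∑ a, N (a, b)) x) := by
  have hterm (p : A × B) : ⟪Y p.2 ((∑ b, N (p.1, b)) x), N p x⟫ = ⟪Y p.2 x, N p x⟫ :=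
    inner_apply_apply_eq_of_commute (hN.marginal_fst.isStarProjection p.1).isSelfAdjoint
      (Commute.sum_right _ _ _ fun b _ => hYN _ _) (hN.marginal_fst_mul p.1 p.2) x
  rw [tdistFam, tdistFam, Fintype.sum_congr _ _ hterm]
  simp only [Fintype.sum_prod_type_right, sum_apply, inner_sum]

lemma IsPVM.tdistFam_apply_marginal_snd {X : A → H →L[ℂ] H} (hN : IsPVM N)
    (hXN : ∀ a p, Commute (X a) (N p)) (x : H) :
    tdistFam (fun p : A × B => X p.1 ((∑ a, N (a, p.2)) x)) (fun p => N p x) =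
      tdistFam (fun a => X a x) (fun a => (∑ b, N (a, b)) x) := by
  have hterm (p : A × B) : ⟪X p.1 ((∑ a, N (a, p.2)) x), N p x⟫ = ⟪X p.1 x, N p x⟫ :=
    inner_apply_apply_eq_of_commute (hN.marginal_snd.isStarProjection p.2).isSelfAdjoint
      (Commute.sum_right _ _ _ fun a _ => hXN _ _) (hN.marginal_snd_mul p.1 p.2) x
  rw [tdistFam, tdistFam, Fintype.sum_congr _ _ hterm]
  simp only [Fintype.sum_prod_type, sum_apply, inner_sum]

theorem tdistFam_apply_apply_le_two_mul {X : A → H →L[ℂ] H} {Y : B → H →L[ℂ] H} {Ψ : H}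
    (hΨ : ‖Ψ‖ = 1) (hN : IsPVM N) (hX : ∑ a, star (X a) * X a = 1)
    (hY : ∑ b, star (Y b) * Y b = 1) (hXN : ∀ a p, Commute (X a) (N p))
    (hYN : ∀ b p, Commute (Y b) (N p)) :
    tdistFam (fun p : A × B => Y p.2 (X p.1 Ψ)) (fun p => X p.1 (Y p.2 Ψ)) ≤
      2 * (tdistFam (fun a => X a Ψ) (fun a => (∑ b, N (a, b)) Ψ) +
        tdistFam (fun b => Y b Ψ) (fun b => (∑ a, N (a, b)) Ψ)) := by
  have hu : ∑ p : A × B, ‖Y p.2 (X p.1 Ψ)‖ ^ 2 = 1 :=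
    (sum_prod_norm_apply_snd_sq hY fun a => X a Ψ).trans (sum_norm_apply_sq_eq_one hX hΨ)
  have hv : ∑ p : A × B, ‖X p.1 (Y p.2 Ψ)‖ ^ 2 = 1 :=
    (sum_prod_norm_apply_fst_sq hX fun b => Y b Ψ).trans (sum_norm_apply_sq_eq_one hY hΨ)
  have hw₁ : ∑ p : A × B, ‖Y p.2 ((∑ b, N (p.1, b)) Ψ)‖ ^ 2 = 1 :=
    (sum_prod_norm_apply_snd_sq hY _).trans
      (sum_norm_apply_sq_eq_one hN.marginal_fst.sum_star_mul_self hΨ)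
  have hw₂ : ∑ p : A × B, ‖X p.1 ((∑ a, N (a, p.2)) Ψ)‖ ^ 2 = 1 :=
    (sum_prod_norm_apply_fst_sq hX _).trans
      (sum_norm_apply_sq_eq_one hN.marginal_snd.sum_star_mul_self hΨ)
  have hm : ∑ p, ‖N p Ψ‖ ^ 2 = 1 := sum_norm_apply_sq_eq_one hN.sum_star_mul_self hΨ
  linarith [tdistFam_triangle hu hv hw₁, tdistFam_triangle hw₁ hv hm, tdistFam_triangle hm hv hw₂,
    tdistFam_prod_apply_snd hY (fun a => X a Ψ) (fun a => (∑ b, N (a, b)) Ψ),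
    hN.tdistFam_apply_marginal_fst hYN Ψ, hN.tdistFam_apply_marginal_snd hXN Ψ,
    tdistFam_comm (fun p => N p Ψ) (fun p : A × B => X p.1 ((∑ a, N (a, p.2)) Ψ)),
    tdistFam_prod_apply_fst hX (fun b => (∑ a, N (a, b)) Ψ) (fun b => Y b Ψ),
    tdistFam_comm (fun b => Y b Ψ) (fun b => (∑ a, N (a, b)) Ψ)]

end AlmostCommuting

theorem almost_commuting_of_close_to_pvm_general {H : Type*} [NormedAddCommGroup H]
    [InnerProductSpace ℂ H] [CompleteSpace H] {A : Type*} [Fintype A]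
    (Ψ : H) (hΨ : ‖Ψ‖ = 1)
    (N : A → A → (H →L[ℂ] H))
    (hNsa : ∀ a₁ a₂, IsSelfAdjoint (N a₁ a₂))
    (hNproj : ∀ a₁ a₂, N a₁ a₂ * N a₁ a₂ = N a₁ a₂)
    (hNorth : ∀ a₁ a₂ b₁ b₂, (a₁, a₂) ≠ (b₁, b₂) → N a₁ a₂ * N b₁ b₂ = 0)
    (hNsum : ∑ a₁, ∑ a₂, N a₁ a₂ = 1)
    (X Y : A → (H →L[ℂ] H))
    (hXpos : ∀ a, (X a).IsPositive) (hYpos : ∀ a, (Y a).IsPositive)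
    (hXsum : ∑ a, X a ^ 2 = 1) (hYsum : ∑ a, Y a ^ 2 = 1)
    (hXN : ∀ a a₁ a₂, X a * N a₁ a₂ = N a₁ a₂ * X a)
    (hYN : ∀ a a₁ a₂, Y a * N a₁ a₂ = N a₁ a₂ * Y a) :
    tdistFam (fun p : A × A => (Y p.2) ((X p.1) Ψ)) (fun p : A × A => (X p.1) ((Y p.2) Ψ))
      ≤ 2 * (tdistFam (fun a => (X a) Ψ) (fun a => (∑ b, N a b) Ψ) +
             tdistFam (fun a => (Y a) Ψ) (fun a => (∑ b, N b a) Ψ)) := by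
  have hN : IsPVM fun p : A × A => N p.1 p.2 :=
    { isStarProjection := fun p => ⟨hNproj p.1 p.2, hNsa p.1 p.2⟩
      mul_eq_zero := fun p q hpq => hNorth p.1 p.2 q.1 q.2 hpq
      sum_eq_one := by rw [Fintype.sum_prod_type, hNsum] }
  have hstar {T : A → H →L[ℂ] H} (hT : ∀ a, (T a).IsPositive) (hT2 : ∑ a, T a ^ 2 = 1) :
      ∑ a, star (T a) * T a = 1 := by
    simpa only [(hT _).isSelfAdjoint.star_eq, sq] using hT2
  exact tdistFam_apply_apply_le_two_mul (N := fun p : A × A => N p.1 p.2) hΨ hN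
    (hstar hXpos hXsum) (hstar hYpos hYsum) (fun a p => hXN a p.1 p.2) (fun b p => hYN b p.1 p.2)

/-- Let `{N^{a₁a₂}}` be a PVM on `H` with marginal projections
`P₁^a = Σ_b N^{ab}` and `P₂^a = Σ_b N^{ba}`, and let `{X^a}`, `{Y^a}` be families of positive
operators with `Σ (X^a)² = Σ (Y^a)² = 1`, each commuting with every `N^{a₁a₂}`.  Then
`D((Y^{a₂} X^{a₁} Ψ), (X^{a₁} Y^{a₂} Ψ)) ≤ 2 [D((X^a Ψ), (P₁^a Ψ)) + D((Y^a Ψ), (P₂^a Ψ))]`. -/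
theorem almost_commuting_of_close_to_pvm {H : Type*} [NormedAddCommGroup H]
    [InnerProductSpace ℂ H] [CompleteSpace H] {A : Type*} [Fintype A] [Nonempty A]
    (Ψ : H) (hΨ : ‖Ψ‖ = 1)
    (N : A → A → (H →L[ℂ] H))
    (hNsa : ∀ a₁ a₂, IsSelfAdjoint (N a₁ a₂))
    (hNproj : ∀ a₁ a₂, N a₁ a₂ * N a₁ a₂ = N a₁ a₂)
    (hNorth : ∀ a₁ a₂ b₁ b₂, (a₁, a₂) ≠ (b₁, b₂) → N a₁ a₂ * N b₁ b₂ = 0)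
    (hNsum : ∑ a₁, ∑ a₂, N a₁ a₂ = 1)
    (X Y : A → (H →L[ℂ] H))
    (hXpos : ∀ a, (X a).IsPositive) (hYpos : ∀ a, (Y a).IsPositive)
    (hXsum : ∑ a, X a ^ 2 = 1) (hYsum : ∑ a, Y a ^ 2 = 1)
    (hXN : ∀ a a₁ a₂, X a * N a₁ a₂ = N a₁ a₂ * X a)
    (hYN : ∀ a a₁ a₂, Y a * N a₁ a₂ = N a₁ a₂ * Y a) :
    tdistFam (fun p : A × A => (Y p.2) ((X p.1) Ψ)) (fun p : A × A => (X p.1) ((Y p.2) Ψ))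
      ≤ 2 * (tdistFam (fun a => (X a) Ψ) (fun a => (∑ b, N a b) Ψ) +
             tdistFam (fun a => (Y a) Ψ) (fun a => (∑ b, N b a) Ψ)) :=
  almost_commuting_of_close_to_pvm_general Ψ hΨ N hNsa hNproj hNorth hNsum X Y hXpos hYpos hXsum
    hYsum hXN hYN
end

section
/- Let H be a complex Hilbert space, Ψ ∈ H a unit vector, Q a positive integer, and A a finite nonempty set. For each q ∈ {1,...,Q} let {X_q^a}_{a∈A} and {Y_q^a}_{a∈A} be families of positive bounded operators on H with Σ_a (X_q^a)² = I and Σ_a (Y_q^a)² = I, such that X_q^a Y_{q'}^{a'} = Y_{q'}^{a'} X_q^a for all q, q' ∈ {1,...,Q} and a, a' ∈ A. Define d_1(q) = D( (X_q^a Ψ)_a, (Y_q^a Ψ)_a ) and d_4(q, q') = D( (X_{q'}^{a'} X_q^{a} Ψ)_{(a,a')}, (X_q^{a} X_{q'}^{a'} Ψ)_{(a,a')} ). Then for every m ≥ 1, every t_1,...,t_m ∈ {1,...,Q}, and every i with 1 ≤ i ≤ m, (1/2) Σ_{z∈A^m} | ‖X_{t_m}^{z_m} X_{t_{m-1}}^{z_{m-1}}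 ··· X_{t_1}^{z_1} Ψ‖² − ‖X_{t_m}^{z_m} ··· X_{t_{i+1}}^{z_{i+1}} X_{t_{i-1}}^{z_{i-1}} ··· X_{t_1}^{z_1} X_{t_i}^{z_i} Ψ‖² | ≤ 2 Σ_{j=1}^{i-1} d_1(t_j) + Σ_{j=1}^{i-1} d_4(t_i, t_j). -/
open scoped ComplexInnerProductSpace

/-- The ordered product `T_m * T_{m-1} * ⋯ * T_1` of a finite family of operators
(the operator with index `1`, i.e. `f 0`, is applied first). -/
def revProd {H : Type*} [NormedAddCommGroup H] [InnerProductSpace ℂ H]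
    {m : ℕ} (f : Fin m → (H →L[ℂ] H)) : H →L[ℂ] H :=
  (List.ofFn f).reverse.prod

/-!
A hybrid argument. Replace the measurements `X_{t_j}`, `j < i`, one at a time by `Y_{t_j}`.
Since every `Y` commutes with every `X`, a replaced measurement can be postponed past all the `X`
measurements, so that the original sequence and the one with `X_{t_i}` moved to the front both
reach the same hybrid: `X_{t_i}`, the other `X`s, then the `Y`s. Each replacement costs
`d₁(t_j)`; on the reordered side `X_{t_j}` must first be swapped with `X_{t_i}`, which costs
`d₄(t_i, t_j)`. A single step is bounded because the measurements performed after it form a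
Kraus family, which preserves the overlap `∑ ⟪u_s, v_s⟫` of two families of vectors, and the
statistical difference of the outcome distributions of two families is at most their `D`.
-/

open Finset Function

section StatDiff

variable {H : Type*} [NormedAddCommGroup H] {S : Type*} [Fintype S]

noncomputable def statDiff (u v : S → H) : ℝ :=
  1 / 2 * ∑ s, |‖u s‖ ^ 2 - ‖v s‖ ^ 2|

theorem statDiff_comm (u v : S → H) : statDiff u v = statDiff v u := by
  simp only [statDiff, abs_sub_comm]

theorem statDiff_self (u : S → H) : statDiff u u = 0 := by
  simp [statDiff]

theorem statDiff_triangle (u v w : S → H) : statDiff u w ≤ statDiff u v + statDiff v w := by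
  simp only [statDiff, ← mul_add, ← sum_add_distrib]
  gcongr with s
  exact abs_sub_le _ _ _

theorem statDiff_le_sum_Iio {m : ℕ} (g : ℕ → S → H) (b : Fin m → ℝ) (i : Fin m)
    (hstep : ∀ j < i, statDiff (g j) (g (j + 1)) ≤ b j) :
    statDiff (g 0) (g i) ≤ ∑ j ∈ Iio i, b j := by
  obtain ⟨n, hn⟩ := i
  induction n with
  | zero =>
    have hIio : Iio (⟨0, hn⟩ : Fin m) = ∅ := by ext j; simp [Fin.lt_def]
    simp [hIio, statDiff_self]
  | succ n ih =>
    have hIio : Iio (⟨n + 1, hn⟩ : Fin m) = insert ⟨n, by omega⟩ (Iio ⟨n, by omega⟩) := by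
      ext j; simp only [mem_Iio, mem_insert, Fin.lt_def, Fin.ext_iff]; omega
    have hn' : n < m := by omega
    calc statDiff (g 0) (g (n + 1))
        ≤ statDiff (g 0) (g n) + statDiff (g n) (g (n + 1)) := statDiff_triangle _ _ _
      _ ≤ ∑ j ∈ Iio ⟨n, hn'⟩, b j + b ⟨n, hn'⟩ :=
          add_le_add (ih hn' fun j hj => hstep j (hj.trans (Fin.mk_lt_mk.2 n.lt_succ_self)))
            (hstep ⟨n, hn'⟩ (Fin.mk_lt_mk.2 n.lt_succ_self))
      _ = ∑ j ∈ Iio ⟨n + 1, hn⟩, b j := by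
          rw [hIio, sum_insert notMem_Iio_self, add_comm]

theorem statDiff_le_tdistFam [InnerProductSpace ℂ H] (u v : S → H) (hu : ∑ s, ⟪u s, u s⟫ = 1)
    (hv : ∑ s, ⟪v s, v s⟫ = 1) : statDiff u v ≤ tdistFam u v := by
  have hnorm : ∀ w : S → H, ∑ s, ⟪w s, w s⟫ = 1 → ∑ s, ‖w s‖ ^ 2 = 1 := fun w hw => by
    simp only [inner_self_eq_norm_sq_to_K] at hw
    exact Complex.ofReal_injective (by push_cast; exact hw)
  set a := fun s => ‖u s‖
  set b := fun s => ‖v s‖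
  have ha : ∑ s, a s ^ 2 = 1 := hnorm u hu
  have hb : ∑ s, b s ^ 2 = 1 := hnorm v hv
  -- With `c = ∑ a b ≥ ‖∑ ⟪u s, v s⟫‖`, Cauchy–Schwarz for `|a² - b²| = |a - b| (a + b)`
  -- gives `(∑ |a² - b²|)² ≤ (∑ (a - b)²) (∑ (a + b)²) = 4 (1 - c²)`.
  set c := ∑ s, a s * b s
  have hc : 0 ≤ c := sum_nonneg fun s _ => by positivity
  have hoverlap : ‖∑ s, ⟪u s, v s⟫‖ ≤ c :=
    (norm_sum_le _ _).trans (sum_le_sum fun s _ => norm_inner_le_norm _ _)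
  have hdiff : ∑ s, (a s - b s) ^ 2 = 2 - 2 * c := by
    simp only [sub_sq, sum_add_distrib, sum_sub_distrib, ha, hb, mul_assoc, ← mul_sum, c]; ring
  have hsum : ∑ s, (a s + b s) ^ 2 = 2 + 2 * c := by
    simp only [add_sq, sum_add_distrib, ha, hb, mul_assoc, ← mul_sum, c]; ring
  have hcs : (∑ s, |a s ^ 2 - b s ^ 2|) ^ 2 ≤ (2 - 2 * c) * (2 + 2 * c) := by
    have h := sum_mul_sq_le_sq_mul_sq univ (fun s => |a s - b s|) (fun s => a s + b s)
    simp only [sq_abs, hdiff, hsum] at h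
    rwa [sum_congr rfl fun s _ => by
      rw [sq_sub_sq, abs_mul, abs_of_nonneg (by positivity : 0 ≤ a s + b s), mul_comm]]
  have hnn := norm_nonneg (∑ s, ⟪u s, v s⟫)
  rw [statDiff, tdistFam, Real.le_sqrt (by positivity) (by nlinarith)]
  nlinarith

end StatDiff

section Kraus

variable {H : Type*} [NormedAddCommGroup H] [InnerProductSpace ℂ H] {A : Type*} [Fintype A]

/-- The Kraus condition `∑ a, (N a)† * N a = 1`, phrased without adjoints. -/
def IsKrausFamily (N : A → H →L[ℂ] H) : Prop :=
  ∀ u v, ∑ a, ⟪N a u, N a v⟫ = ⟪u, v⟫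

theorem isKrausFamily_of_isSelfAdjoint [CompleteSpace H] {N : A → H →L[ℂ] H}
    (hsa : ∀ a, IsSelfAdjoint (N a)) (hsum : ∑ a, N a ^ 2 = 1) : IsKrausFamily N := by
  intro u v
  simp_rw [← ContinuousLinearMap.adjoint_inner_right (N _), (hsa _).adjoint_eq, ← inner_sum,
    ← mul_apply_eq_comp, ← sq, ← _root_.sum_apply, hsum, one_apply_eq_self]

variable {ι : Type*} [Fintype ι] [DecidableEq ι] {M : Type*} [AddCommMonoid M]

theorem sum_sum_update (j : ι) (g : (ι → A) → M) :
    ∑ z, ∑ a, g (update z j a) = Fintype.card A • ∑ z, g z := by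
  -- `(z, a) ↦ (update z j a, z j)` is an involution of `(ι → A) × A`
  let e := Involutive.toPerm (fun p : (ι → A) × A => (update p.1 j p.2, p.1 j))
    fun p => by simp
  rw [← Fintype.sum_prod_type',
    Fintype.sum_equiv e (fun p => g (update p.1 j p.2)) (fun p => g p.1) fun _ => rfl,
    Fintype.sum_prod_type]
  simp only [sum_const, card_univ, smul_sum]

theorem sum_apply_eval (k : ι) (f : A → M) :
    ∑ z : ι → A, f (z k) = Fintype.card A ^ (Fintype.card ι - 1) • ∑ a, f a := by
  simpa using Fintype.sum_piFinset_apply f univ k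

theorem sum_apply_eval_eval {k k' : ι} (hk : k ≠ k') (f : A → A → M) :
    ∑ z : ι → A, f (z k) (z k') = Fintype.card A ^ (Fintype.card ι - 2) • ∑ a, ∑ b, f a b := by
  rw [← (Equiv.piSplitAt k fun _ => A).symm.sum_comp, Fintype.sum_prod_type, smul_sum]
  refine sum_congr rfl fun a _ => ?_
  have := sum_apply_eval (⟨k', hk.symm⟩ : {j // j ≠ k}) (f a)
  simp only [Equiv.piSplitAt_symm_apply, hk.symm, dif_neg, not_false_eq_true, dite_true] at this ⊢
  rw [this, Fintype.card_subtype_compl, Fintype.card_subtype_eq, Nat.sub_sub]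

theorem IsKrausFamily.card_mul_sum_inner {N : A → H →L[ℂ] H} (hN : IsKrausFamily N) (j : ι)
    (F G : (ι → A) → H) (hF : ∀ z b, F (update z j b) = F z) (hG : ∀ z b, G (update z j b) = G z) :
    (Fintype.card A : ℂ) * ∑ z, ⟪N (z j) (F z), N (z j) (G z)⟫ = ∑ z, ⟪F z, G z⟫ := by
  rw [← nsmul_eq_mul, ← sum_sum_update j]
  simp only [update_self, hF, hG]
  exact sum_congr rfl fun z _ => hN _ _

end Kraus

section SequentialMeasurement

variable {H : Type*} [NormedAddCommGroup H] [InnerProductSpace ℂ H] {A : Type*} {ι : Type*}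

/-- The last entry of `c` is the measurement performed first. -/
def seqOp (c : List (ι × (A → H →L[ℂ] H))) (z : ι → A) : H →L[ℂ] H :=
  (c.map fun p => p.2 (z p.1)).prod

theorem seqOp_append (c c' : List (ι × (A → H →L[ℂ] H))) (z : ι → A) :
    seqOp (c ++ c') z = seqOp c z * seqOp c' z := by
  simp [seqOp]

theorem seqOp_append_singleton_apply (l : List (ι × (A → H →L[ℂ] H))) (k : ι)
    (W : A → H →L[ℂ] H) (z : ι → A) (v : H) :
    seqOp (l ++ [(k, W)]) z v = seqOp l z (W (z k) v) := by
  simp [seqOp]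

theorem seqOp_append_pair_apply (l : List (ι × (A → H →L[ℂ] H))) (k k' : ι)
    (W V : A → H →L[ℂ] H) (z : ι → A) (v : H) :
    seqOp (l ++ [(k, W), (k', V)]) z v = seqOp l z (W (z k) (V (z k') v)) := by
  simp [seqOp]

theorem seqOp_cons_eq_append (p : ι × (A → H →L[ℂ] H)) (c : List (ι × (A → H →L[ℂ] H)))
    (z : ι → A) (h : ∀ q ∈ c, Commute (p.2 (z p.1)) (q.2 (z q.1))) :
    seqOp (p :: c) z = seqOp (c ++ [p]) z := by
  have hc : ∀ T ∈ c.map fun q => q.2 (z q.1), Commute (p.2 (z p.1)) T := by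
    simp only [List.mem_map]
    rintro _ ⟨q, hq, rfl⟩
    exact h q hq
  simpa [seqOp] using (Commute.list_prod_right _ _ hc).eq

def withOps (M : ι → A → H →L[ℂ] H) (l : List ι) : List (ι × (A → H →L[ℂ] H)) :=
  l.map fun j => (j, M j)

@[simp]
theorem map_fst_withOps (M : ι → A → H →L[ℂ] H) (l : List ι) :
    (withOps M l).map Prod.fst = l := by
  simp [withOps, Function.comp_def]

@[simp]
theorem seqOp_withOps (M : ι → A → H →L[ℂ] H) (l : List ι) (z : ι → A) :
    seqOp (withOps M l) z = (l.map fun j => M j (z j)).prod := by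
  simp [seqOp, withOps, Function.comp_def]

theorem isKrausFamily_of_mem_withOps_append [Fintype A] {M M' : ι → A → H →L[ℂ] H}
    (hM : ∀ j, IsKrausFamily (M j)) (hM' : ∀ j, IsKrausFamily (M' j)) {l l' : List ι} :
    ∀ p ∈ withOps M l ++ withOps M' l', IsKrausFamily p.2 := by
  intro p hp
  rcases List.mem_append.1 hp with hp | hp <;> obtain ⟨j, -, rfl⟩ := List.mem_map.1 hp
  exacts [hM j, hM' j]

variable [DecidableEq ι]

theorem seqOp_update {c : List (ι × (A → H →L[ℂ] H))} {j : ι} (hj : j ∉ c.map Prod.fst)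
    (z : ι → A) (b : A) : seqOp c (update z j b) = seqOp c z := by
  unfold seqOp
  congr 1
  refine List.map_congr_left fun p hp => ?_
  rw [update_of_ne (by rintro rfl; exact hj (List.mem_map_of_mem hp))]

variable [Fintype A] [Fintype ι]

theorem card_pow_mul_sum_inner_seqOp (c : List (ι × (A → H →L[ℂ] H)))
    (hc : ∀ p ∈ c, IsKrausFamily p.2) (hnd : (c.map Prod.fst).Nodup) (x y : (ι → A) → H)
    (hx : ∀ j ∈ c.map Prod.fst, ∀ z b, x (update z j b) = x z)
    (hy : ∀ j ∈ c.map Prod.fst, ∀ z b, y (update z j b) = y z) :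
    (Fintype.card A : ℂ) ^ c.length * ∑ z, ⟪seqOp c z (x z), seqOp c z (y z)⟫ =
      ∑ z, ⟪x z, y z⟫ := by
  induction c with
  | nil => simp [seqOp]
  | cons p c ih =>
    obtain ⟨hpc, hnd⟩ := List.nodup_cons.1 hnd
    have hupdate : ∀ w : (ι → A) → H,
        (∀ j ∈ (p :: c).map Prod.fst, ∀ z b, w (update z j b) = w z) →
        ∀ z b, seqOp c (update z p.1 b) (w (update z p.1 b)) = seqOp c z (w z) :=
      fun w hw z b => by rw [seqOp_update hpc, hw p.1 (by simp) z b]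
    calc (Fintype.card A : ℂ) ^ (p :: c).length *
          ∑ z, ⟪seqOp (p :: c) z (x z), seqOp (p :: c) z (y z)⟫
        = (Fintype.card A : ℂ) ^ c.length * ((Fintype.card A : ℂ) *
            ∑ z, ⟪p.2 (z p.1) (seqOp c z (x z)), p.2 (z p.1) (seqOp c z (y z))⟫) := by
          simp [seqOp, pow_succ, mul_assoc]
      _ = (Fintype.card A : ℂ) ^ c.length * ∑ z, ⟪seqOp c z (x z), seqOp c z (y z)⟫ := by
          rw [(hc p (by simp)).card_mul_sum_inner p.1 _ _ (hupdate x hx) (hupdate y hy)]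
      _ = ∑ z, ⟪x z, y z⟫ := ih (fun q hq => hc q (by simp [hq])) hnd
          (fun j hj => hx j (by simp [hj])) (fun j hj => hy j (by simp [hj]))

end SequentialMeasurement

section HybridSteps

theorem List.Nodup.length_eq_card {ι : Type*} [Fintype ι] {l : List ι} (hnd : l.Nodup)
    (hall : ∀ j, j ∈ l) : l.length = Fintype.card ι := by
  classical
  rw [← List.toFinset_card_of_nodup hnd, ← card_univ]
  exact congrArg card (eq_univ_of_forall fun j => List.mem_toFinset.2 (hall j))

variable {H : Type*} [NormedAddCommGroup H] [InnerProductSpace ℂ H] {A : Type*} [Fintype A]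
  [Nonempty A] {ι : Type*} [Fintype ι] [DecidableEq ι] {l : List (ι × (A → H →L[ℂ] H))}

theorem sum_inner_seqOp_eval (hl : ∀ p ∈ l, IsKrausFamily p.2) {k : ι}
    (hnd : (l.map Prod.fst ++ [k]).Nodup) (hall : ∀ j, j ∈ l.map Prod.fst ++ [k]) (f g : A → H) :
    ∑ z, ⟪seqOp l z (f (z k)), seqOp l z (g (z k))⟫ = ∑ a, ⟪f a, g a⟫ := by
  have hlen : l.length + 1 = Fintype.card ι := by simpa using hnd.length_eq_card hall
  obtain ⟨hndl, -, hk⟩ := List.nodup_append.1 hnd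
  have hindep : ∀ w : A → H, ∀ j ∈ l.map Prod.fst, ∀ z b, w (update z j b k) = w (z k) :=
    fun w j hj (z : ι → A) (b : A) => by rw [update_of_ne fun h => hk j hj k (by simp) h.symm]
  have h := card_pow_mul_sum_inner_seqOp l hl hndl (fun z => f (z k)) (fun z => g (z k))
    (hindep f) (hindep g)
  rw [sum_apply_eval k fun a => ⟪f a, g a⟫, nsmul_eq_mul, ← hlen, Nat.add_sub_cancel] at h
  push_cast at h
  exact mul_left_cancel₀ (pow_ne_zero _ (Nat.cast_ne_zero.2 Fintype.card_ne_zero)) h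

theorem sum_inner_seqOp_eval_eval (hl : ∀ p ∈ l, IsKrausFamily p.2) {k k' : ι}
    (hnd : (l.map Prod.fst ++ [k, k']).Nodup) (hall : ∀ j, j ∈ l.map Prod.fst ++ [k, k'])
    (f g : A → A → H) :
    ∑ z, ⟪seqOp l z (f (z k) (z k')), seqOp l z (g (z k) (z k'))⟫ = ∑ a, ∑ b, ⟪f a b, g a b⟫ := by
  have hlen : l.length + 2 = Fintype.card ι := by simpa using hnd.length_eq_card hall
  obtain ⟨hndl, hkk', hdisj⟩ := List.nodup_append.1 hnd
  have hindep : ∀ w : A → A → H, ∀ j ∈ l.map Prod.fst, ∀ z b,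
      w (update z j b k) (update z j b k') = w (z k) (z k') := fun w j hj (z : ι → A) (b : A) => by
    rw [update_of_ne fun h => hdisj j hj k (by simp) h.symm,
      update_of_ne fun h => hdisj j hj k' (by simp) h.symm]
  have h := card_pow_mul_sum_inner_seqOp l hl hndl (fun z => f (z k) (z k'))
    (fun z => g (z k) (z k')) (hindep f) (hindep g)
  rw [sum_apply_eval_eval (by simpa using hkk') fun a b => ⟪f a b, g a b⟫, nsmul_eq_mul, ← hlen,
    Nat.add_sub_cancel] at h
  push_cast at h
  exact mul_left_cancel₀ (pow_ne_zero _ (Nat.cast_ne_zero.2 Fintype.card_ne_zero)) h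

variable {Ψ : H}

theorem statDiff_seqOp_snoc_le (hl : ∀ p ∈ l, IsKrausFamily p.2) {k : ι}
    (hnd : (l.map Prod.fst ++ [k]).Nodup) (hall : ∀ j, j ∈ l.map Prod.fst ++ [k])
    (hΨ : ‖Ψ‖ = 1) {W W' : A → H →L[ℂ] H} (hW : IsKrausFamily W) (hW' : IsKrausFamily W') :
    statDiff (fun z => seqOp (l ++ [(k, W)]) z Ψ) (fun z => seqOp (l ++ [(k, W')]) z Ψ) ≤
      tdistFam (fun a => W a Ψ) (fun a => W' a Ψ) := by
  have hΨ' : ⟪Ψ, Ψ⟫ = 1 := by simp [inner_self_eq_norm_sq_to_K, hΨ]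
  have key := sum_inner_seqOp_eval hl hnd hall
  simp only [seqOp_append_singleton_apply]
  calc _ ≤ tdistFam (fun z => seqOp l z (W (z k) Ψ)) (fun z => seqOp l z (W' (z k) Ψ)) :=
        statDiff_le_tdistFam _ _ ((key (fun a => W a Ψ) _).trans ((hW Ψ Ψ).trans hΨ'))
          ((key (fun a => W' a Ψ) _).trans ((hW' Ψ Ψ).trans hΨ'))
    _ = _ := by unfold tdistFam; rw [key (fun a => W a Ψ) fun a => W' a Ψ]

theorem statDiff_seqOp_swap_le (hl : ∀ p ∈ l, IsKrausFamily p.2) {k k' : ι}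
    (hnd : (l.map Prod.fst ++ [k, k']).Nodup) (hall : ∀ j, j ∈ l.map Prod.fst ++ [k, k'])
    (hΨ : ‖Ψ‖ = 1) {W V : A → H →L[ℂ] H} (hW : IsKrausFamily W) (hV : IsKrausFamily V) :
    statDiff (fun z => seqOp (l ++ [(k, W), (k', V)]) z Ψ)
        (fun z => seqOp (l ++ [(k', V), (k, W)]) z Ψ) ≤
      tdistFam (fun p : A × A => W p.2 (V p.1 Ψ)) (fun p : A × A => V p.1 (W p.2 Ψ)) := by
  have hΨ' : ⟪Ψ, Ψ⟫ = 1 := by simp [inner_self_eq_norm_sq_to_K, hΨ]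
  have hswap := (List.Perm.swap k' k []).append_left (l.map Prod.fst)
  have key := sum_inner_seqOp_eval_eval hl (hswap.nodup_iff.1 hnd) fun j => hswap.mem_iff.1 (hall j)
  have hWV : ∑ a, ∑ b, ⟪W b (V a Ψ), W b (V a Ψ)⟫ = 1 := by
    rw [sum_congr rfl fun a _ => hW _ _, hV, hΨ']
  have hVW : ∑ a, ∑ b, ⟪V a (W b Ψ), V a (W b Ψ)⟫ = 1 := by
    rw [sum_comm, sum_congr rfl fun b _ => hV _ _, hW, hΨ']
  simp only [seqOp_append_pair_apply]
  calc _ ≤ tdistFam (fun z => seqOp l z (W (z k) (V (z k') Ψ)))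
          (fun z => seqOp l z (V (z k') (W (z k) Ψ))) :=
        statDiff_le_tdistFam _ _ ((key (fun a b => W b (V a Ψ)) _).trans hWV)
          ((key (fun a b => V a (W b Ψ)) _).trans hVW)
    _ = _ := by
      unfold tdistFam
      rw [key (fun a b => W b (V a Ψ)) fun a b => V a (W b Ψ), Fintype.sum_prod_type]

end HybridSteps

section Reordering

variable {H : Type*} [NormedAddCommGroup H] [InnerProductSpace ℂ H] {A : Type*} {Qn m : ℕ}
  (X Y : Fin Qn → A → H →L[ℂ] H) (t : Fin m → Fin Qn)

/-- Measure `X_{t_k}, …, X_{t_{m-1}}` in this order, then `Y_{t_{k-1}}, …, Y_{t_0}`. -/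
def hybrid (k : ℕ) : List (Fin m × (A → H →L[ℂ] H)) :=
  withOps (fun j => Y (t j)) ((List.finRange m).take k) ++
    withOps (fun j => X (t j)) ((List.finRange m).drop k).reverse

/-- Measure `X_{t_i}`, then `X_{t_k}, …, X_{t_{i-1}}, X_{t_{i+1}}, …, X_{t_{m-1}}`,
then `Y_{t_{k-1}}, …, Y_{t_0}`. -/
def movedHybrid (i : Fin m) (k : ℕ) : List (Fin m × (A → H →L[ℂ] H)) :=
  withOps (fun j => Y (t j)) ((List.finRange m).take k) ++
    withOps (fun j => X (t j)) (((List.finRange m).drop (i + 1)).reverse ++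
      (((List.finRange m).take i).drop k).reverse ++ [i])

theorem finRange_drop_eq_cons (k : Fin m) :
    (List.finRange m).drop k = k :: (List.finRange m).drop (k + 1) := by
  rw [List.drop_eq_getElem_cons (by simp)]
  simp

theorem finRange_take_add_one (k : Fin m) :
    (List.finRange m).take (k + 1) = (List.finRange m).take k ++ [k] := by
  rw [← List.take_concat_get' _ _ (by simp)]
  simp

theorem finRange_take_drop_eq_cons {i k : Fin m} (hk : k < i) :
    ((List.finRange m).take i).drop k = k :: ((List.finRange m).take i).drop (k + 1) := by
  rw [List.drop_eq_getElem_cons (by simpa using hk)]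
  simp

theorem map_fst_hybrid_perm (k : ℕ) :
    ((hybrid X Y t k).map Prod.fst).Perm (List.finRange m) := by
  simpa [hybrid] using ((List.reverse_perm _).append_left _).trans
    (List.Perm.of_eq (List.take_append_drop k (List.finRange m)))

theorem map_fst_movedHybrid_perm (i : Fin m) {k : ℕ} (hk : k ≤ i) :
    ((movedHybrid X Y t i k).map Prod.fst).Perm (List.finRange m) := by
  set L := List.finRange m
  have hmoved : ((L.drop (i + 1)).reverse ++ ((L.take i).drop k).reverse ++ [i]).Perm
      ((L.take i).drop k ++ [i] ++ L.drop (i + 1)) := by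
    rw [List.append_assoc]
    exact ((List.reverse_perm _).append ((List.reverse_perm _).append_right [i])).trans
      List.perm_append_comm
  have htake : L.take k ++ (L.take i).drop k = L.take i := by
    conv_rhs => rw [← List.take_append_drop k (L.take i), List.take_take, min_eq_left hk]
  have hsplit : L.take k ++ ((L.take i).drop k ++ [i] ++ L.drop (i + 1)) = L := by
    rw [← List.append_assoc, ← List.append_assoc, htake, List.append_assoc, List.singleton_append,
      ← finRange_drop_eq_cons, List.take_append_drop]
  have h := hmoved.append_left (L.take k)
  rw [hsplit] at h
  simpa [movedHybrid] using h

theorem seqOp_hybrid_zero (z : Fin m → A) :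
    seqOp (hybrid X Y t 0) z = revProd fun j => X (t j) (z j) := by
  simp [hybrid, seqOp_append, revProd, List.ofFn_eq_map, List.map_reverse]

theorem seqOp_movedHybrid_zero (i : Fin m) (z : Fin m → A) :
    seqOp (movedHybrid X Y t i 0) z =
      ((List.ofFn fun j => X (t j) (z j)).eraseIdx i).reverse.prod * X (t i) (z i) := by
  simp [movedHybrid, seqOp_append, List.ofFn_eq_map, List.eraseIdx_eq_take_drop_succ,
    List.map_reverse, mul_assoc]

theorem movedHybrid_self (i : Fin m) : movedHybrid X Y t i i = hybrid X Y t i := by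
  simp [movedHybrid, hybrid, finRange_drop_eq_cons i]

theorem commute_of_mem_withOps (hcomm : ∀ q q' a a', X q a * Y q' a' = Y q' a' * X q a)
    (q : Fin Qn) (a : A) (z : Fin m → A) {l : List (Fin m)} :
    ∀ p ∈ withOps (fun j => X (t j)) l, Commute (Y q a) (p.2 (z p.1)) := by
  intro p hp
  obtain ⟨j, -, rfl⟩ := List.mem_map.1 hp
  exact (hcomm _ _ _ _).symm

variable [Fintype A] [Nonempty A] {X Y} {Ψ : H} (hX : ∀ q, IsKrausFamily (X q))
  (hY : ∀ q, IsKrausFamily (Y q)) (hcomm : ∀ q q' a a', X q a * Y q' a' = Y q' a' * X q a)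
  (hΨ : ‖Ψ‖ = 1)
include hX hY hcomm hΨ

theorem statDiff_hybrid_succ_le (k : Fin m) :
    statDiff (fun z => seqOp (hybrid X Y t k) z Ψ) (fun z => seqOp (hybrid X Y t (k + 1)) z Ψ) ≤
      tdistFam (fun a => X (t k) a Ψ) (fun a => Y (t k) a Ψ) := by
  set L := List.finRange m
  set Ys := withOps (fun j => Y (t j)) (L.take k)
  set Xs := withOps (fun j => X (t j)) (L.drop (k + 1)).reverse
  have hcur : hybrid X Y t k = Ys ++ Xs ++ [(k, X (t k))] := by
    simp [hybrid, finRange_drop_eq_cons k, withOps, Ys, Xs, L]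
  have hnext (z : Fin m → A) :
      seqOp (hybrid X Y t (k + 1)) z = seqOp (Ys ++ Xs ++ [(k, Y (t k))]) z := by
    have h : hybrid X Y t (k + 1) = Ys ++ (k, Y (t k)) :: Xs := by
      simp [hybrid, finRange_take_add_one k, withOps, Ys, Xs, L]
    rw [h, seqOp_append, seqOp_cons_eq_append _ _ _ (commute_of_mem_withOps X Y t hcomm _ _ z),
      ← seqOp_append, List.append_assoc]
  have hperm : ((Ys ++ Xs).map Prod.fst ++ [k]).Perm L := by
    simpa [hcur] using map_fst_hybrid_perm X Y t k
  simp only [hnext, hcur]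
  exact statDiff_seqOp_snoc_le
    (isKrausFamily_of_mem_withOps_append (fun j => hY (t j)) fun j => hX (t j))
    (hperm.nodup_iff.2 (List.nodup_finRange m)) (fun j => hperm.mem_iff.2 (List.mem_finRange j))
    hΨ (hX _) (hY _)

theorem statDiff_movedHybrid_succ_le {i k : Fin m} (hk : k < i) :
    statDiff (fun z => seqOp (movedHybrid X Y t i k) z Ψ)
        (fun z => seqOp (movedHybrid X Y t i (k + 1)) z Ψ) ≤
      tdistFam (fun p : A × A => X (t k) p.2 (X (t i) p.1 Ψ))
          (fun p : A × A => X (t i) p.1 (X (t k) p.2 Ψ)) +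
        tdistFam (fun a => X (t k) a Ψ) (fun a => Y (t k) a Ψ) := by
  set L := List.finRange m
  set Ys := withOps (fun j => Y (t j)) (L.take k)
  set Xs := withOps (fun j => X (t j))
    ((L.drop (i + 1)).reverse ++ ((L.take i).drop (k + 1)).reverse)
  set Xs' := withOps (fun j => X (t j))
    ((L.drop (i + 1)).reverse ++ ((L.take i).drop (k + 1)).reverse ++ [i])
  have hcur : movedHybrid X Y t i k = Ys ++ Xs ++ [(k, X (t k)), (i, X (t i))] := by
    simp [movedHybrid, finRange_take_drop_eq_cons hk, withOps, Ys, Xs, L]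
  have hswapped : Ys ++ Xs ++ [(i, X (t i)), (k, X (t k))] = Ys ++ Xs' ++ [(k, X (t k))] := by
    simp [withOps, Xs, Xs']
  have hnext (z : Fin m → A) :
      seqOp (movedHybrid X Y t i (k + 1)) z = seqOp (Ys ++ Xs' ++ [(k, Y (t k))]) z := by
    have h : movedHybrid X Y t i (k + 1) = Ys ++ (k, Y (t k)) :: Xs' := by
      simp [movedHybrid, finRange_take_add_one k, withOps, Ys, Xs', L]
    rw [h, seqOp_append, seqOp_cons_eq_append _ _ _ (commute_of_mem_withOps X Y t hcomm _ _ z),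
      ← seqOp_append, List.append_assoc]
  have hperm : ((Ys ++ Xs).map Prod.fst ++ [k, i]).Perm L := by
    simpa [hcur] using map_fst_movedHybrid_perm X Y t i hk.le
  have hperm' : ((Ys ++ Xs').map Prod.fst ++ [k]).Perm L := by
    have h : (Ys ++ Xs').map Prod.fst ++ [k] = (Ys ++ Xs).map Prod.fst ++ [i, k] := by
      simp [Xs, Xs', withOps]
    rw [h]
    exact ((List.Perm.swap k i []).append_left _).trans hperm
  have hKraus {l'} := isKrausFamily_of_mem_withOps_append (fun j => hY (t j))
    (fun j => hX (t j)) (l := L.take k) (l' := l')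
  calc _ ≤ statDiff _ (fun z => seqOp (Ys ++ Xs ++ [(i, X (t i)), (k, X (t k))]) z Ψ) +
          statDiff _ _ := statDiff_triangle _ _ _
    _ ≤ _ := by
      gcongr
      · rw [hcur]
        exact statDiff_seqOp_swap_le hKraus (hperm.nodup_iff.2 (List.nodup_finRange m))
          (fun j => hperm.mem_iff.2 (List.mem_finRange j)) hΨ (hX _) (hX _)
      · simp only [hnext, hswapped]
        exact statDiff_seqOp_snoc_le hKraus (hperm'.nodup_iff.2 (List.nodup_finRange m))
          (fun j => hperm'.mem_iff.2 (List.mem_finRange j)) hΨ (hX _) (hY _)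

end Reordering

theorem selection_reordering_bound_general {H : Type*} [NormedAddCommGroup H]
    [InnerProductSpace ℂ H] [CompleteSpace H] {A : Type*} [Fintype A] [Nonempty A]
    (Qn : ℕ)
    (Ψ : H) (hΨ : ‖Ψ‖ = 1)
    (X Y : Fin Qn → A → (H →L[ℂ] H))
    (hXpos : ∀ q a, (X q a).IsPositive) (hYpos : ∀ q a, (Y q a).IsPositive)
    (hXsum : ∀ q, ∑ a, X q a ^ 2 = 1) (hYsum : ∀ q, ∑ a, Y q a ^ 2 = 1)
    (hcomm : ∀ q q' a a', X q a * Y q' a' = Y q' a' * X q a)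
    (m : ℕ) (t : Fin m → Fin Qn) (i : Fin m) :
    (1 / 2) * ∑ z : Fin m → A,
        |‖(revProd fun j => X (t j) (z j)) Ψ‖ ^ 2 -
          ‖(((List.ofFn fun j => X (t j) (z j)).eraseIdx i).reverse.prod * X (t i) (z i)) Ψ‖ ^ 2|
      ≤ 2 * (∑ j ∈ Finset.Iio i, tdistFam (fun a => (X (t j) a) Ψ) (fun a => (Y (t j) a) Ψ)) +
        ∑ j ∈ Finset.Iio i,
          tdistFam (fun p : A × A => (X (t j) p.2) ((X (t i) p.1) Ψ))
            (fun p : A × A => (X (t i) p.1) ((X (t j) p.2) Ψ)) := by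
  have hX q := isKrausFamily_of_isSelfAdjoint (fun a => (hXpos q a).isSelfAdjoint) (hXsum q)
  have hY q := isKrausFamily_of_isSelfAdjoint (fun a => (hYpos q a).isSelfAdjoint) (hYsum q)
  let state (c : List (Fin m × (A → H →L[ℂ] H))) (z : Fin m → A) : H := seqOp c z Ψ
  calc _ = statDiff (state (hybrid X Y t 0)) (state (movedHybrid X Y t i 0)) := by
        simp only [statDiff, state, seqOp_hybrid_zero, seqOp_movedHybrid_zero]
    _ ≤ statDiff (state (hybrid X Y t 0)) (state (hybrid X Y t i)) +
          statDiff (state (movedHybrid X Y t i 0)) (state (movedHybrid X Y t i i)) := by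
        rw [statDiff_comm (state (movedHybrid X Y t i 0)), movedHybrid_self]
        exact statDiff_triangle _ _ _
    _ ≤ _ := add_le_add
          (statDiff_le_sum_Iio (fun k => state (hybrid X Y t k)) _ i fun k _ =>
            statDiff_hybrid_succ_le t hX hY hcomm hΨ k)
          (statDiff_le_sum_Iio (fun k => state (movedHybrid X Y t i k)) _ i fun k hk =>
            statDiff_movedHybrid_succ_le t hX hY hcomm hΨ hk)
    _ = _ := by rw [sum_add_distrib]; ring

/-- Claim `selection`.  Let `{X_q^a}` and `{Y_q^a}` (`q ∈ [Q]`) be families of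
positive operators with `Σ_a (X_q^a)² = Σ_a (Y_q^a)² = 1` such that every `X` commutes with
every `Y`.  With `d₁(q) = D((X_q^a Ψ)_a, (Y_q^a Ψ)_a)` and
`d₄(q,q') = D((X_{q'}^{a'} X_q^a Ψ), (X_q^a X_{q'}^{a'} Ψ))`, moving the `i`-th measurement of a
sequence `t_1, …, t_m` to the front changes the outcome distribution by at most
`2 Σ_{j<i} d₁(t_j) + Σ_{j<i} d₄(t_i, t_j)` in statistical difference. -/
theorem selection_reordering_bound {H : Type*} [NormedAddCommGroup H]
    [InnerProductSpace ℂ H] [CompleteSpace H] {A : Type*} [Fintype A] [Nonempty A]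
    (Qn : ℕ) (hQn : 0 < Qn)
    (Ψ : H) (hΨ : ‖Ψ‖ = 1)
    (X Y : Fin Qn → A → (H →L[ℂ] H))
    (hXpos : ∀ q a, (X q a).IsPositive) (hYpos : ∀ q a, (Y q a).IsPositive)
    (hXsum : ∀ q, ∑ a, X q a ^ 2 = 1) (hYsum : ∀ q, ∑ a, Y q a ^ 2 = 1)
    (hcomm : ∀ q q' a a', X q a * Y q' a' = Y q' a' * X q a)
    (m : ℕ) (hm : 1 ≤ m) (t : Fin m → Fin Qn) (i : Fin m) :
    (1 / 2) * ∑ z : Fin m → A,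
        |‖(revProd fun j => X (t j) (z j)) Ψ‖ ^ 2 -
          ‖(((List.ofFn fun j => X (t j) (z j)).eraseIdx i).reverse.prod * X (t i) (z i)) Ψ‖ ^ 2|
      ≤ 2 * (∑ j ∈ Finset.Iio i, tdistFam (fun a => (X (t j) a) Ψ) (fun a => (Y (t j) a) Ψ)) +
        ∑ j ∈ Finset.Iio i,
          tdistFam (fun p : A × A => (X (t j) p.2) ((X (t i) p.1) Ψ))
            (fun p : A × A => (X (t i) p.1) ((X (t j) p.2) Ψ)) :=
  selection_reordering_bound_general Qn Ψ hΨ X Y hXpos hYpos hXsum hYsum hcomm m t i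
end

section
/- Let Q be a positive integer, let π be a probability distribution on {1,...,Q} with π(1) ≥ π(2) ≥ ... ≥ π(Q), and let g : {1,...,Q} × {1,...,Q} → ℝ be nonnegative and symmetric (g(q, q') = g(q', q) for all q, q'). Then ( Σ_{1 ≤ q' < q ≤ Q} π(q) g(q, q') )² ≤ (Q²/4) Σ_{q=1}^{Q} Σ_{q'=1}^{Q} π(q) π(q') g(q, q')². -/
/-- If `π` is a probability distribution on `{1,...,Q}` with decreasing
weights and `g` is nonnegative and symmetric, then
`(Σ_{q' < q} π(q) g(q,q'))² ≤ (Q²/4) Σ_{q,q'} π(q) π(q') g(q,q')²`. -/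
theorem weighted_offdiag_sum_sq_le (Q : ℕ) (hQ : 0 < Q) (π : Fin Q → ℝ)
    (g : Fin Q → Fin Q → ℝ)
    (hπ0 : ∀ q, 0 ≤ π q) (hπ1 : ∑ q, π q = 1)
    (hπmono : ∀ q q' : Fin Q, q ≤ q' → π q' ≤ π q)
    (hg0 : ∀ q q', 0 ≤ g q q') (hgsym : ∀ q q', g q q' = g q' q) :
    (∑ q, ∑ q' ∈ Finset.Iio q, π q * g q q') ^ 2 ≤
      ((Q : ℝ) ^ 2 / 4) * ∑ q, ∑ q', π q * π q' * g q q' ^ 2 := by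
  classical
  set s : Finset ((_ : Fin Q) × Fin Q) :=
    (Finset.univ : Finset (Fin Q)).sigma (fun q => Finset.Iio q) with hs
  set T : ℝ := ∑ q, ∑ q', π q * π q' * g q q' ^ 2 with hT
  set S : ℝ := ∑ q, ∑ q' ∈ Finset.Iio q, π q * π q' * g q q' ^ 2 with hS
  -- Cauchy–Schwarz on the sigma set
  have h1 : (∑ q, ∑ q' ∈ Finset.Iio q, π q * g q q') ^ 2 ≤
      (s.card : ℝ) * ∑ q, ∑ q' ∈ Finset.Iio q, (π q * g q q') ^ 2 := by
    have := sq_sum_le_card_mul_sum_sq (s := s) (f := fun p => π p.1 * g p.1 p.2)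
    simpa [hs, Finset.sum_sigma] using this
  -- pointwise bound using monotonicity of π
  have h2 : ∑ q, ∑ q' ∈ Finset.Iio q, (π q * g q q') ^ 2 ≤ S := by
    apply Finset.sum_le_sum
    intro q _
    apply Finset.sum_le_sum
    intro q' hq'
    have hlt : q' < q := Finset.mem_Iio.mp hq'
    have hππ : π q ≤ π q' := hπmono q' q hlt.le
    have : (π q * g q q') ^ 2 = π q * π q * g q q' ^ 2 := by ring
    rw [this]
    have := mul_le_mul_of_nonneg_left hππ (hπ0 q)
    exact mul_le_mul_of_nonneg_right this (sq_nonneg _)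
  -- the strict-lower-triangle sum is at most half of the full sum
  have h3 : 2 * S ≤ T := by
    have hsplit : ∀ q : Fin Q, (Finset.univ : Finset (Fin Q)) =
        insert q (Finset.Iio q ∪ Finset.Ioi q) := by
      intro q
      ext x
      simp [lt_or_gt_of_ne, eq_comm]
      rcases lt_trichotomy x q with h | h | h <;> tauto
    have hswap : ∑ q, ∑ q' ∈ Finset.Ioi q, π q * π q' * g q q' ^ 2 = S := by
      rw [Finset.sum_comm' (t' := Finset.univ) (s' := fun y => Finset.Iio y)
        (by intro x y; simp)]
      rw [hS]
      apply Finset.sum_congr rfl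
      intro q _
      apply Finset.sum_congr rfl
      intro q' _
      rw [hgsym q q']
      ring
    have hdiag : 0 ≤ ∑ q : Fin Q, π q * π q * g q q ^ 2 := by
      apply Finset.sum_nonneg
      intro q _
      have := hπ0 q
      positivity
    have : T = (∑ q : Fin Q, π q * π q * g q q ^ 2) + S + S := by
      rw [hT]
      have : ∀ q : Fin Q, ∑ q', π q * π q' * g q q' ^ 2 =
          π q * π q * g q q ^ 2 + ((∑ q' ∈ Finset.Iio q, π q * π q' * g q q' ^ 2) +
            ∑ q' ∈ Finset.Ioi q, π q * π q' * g q q' ^ 2) := by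
        intro q
        rw [hsplit q, Finset.sum_insert (by simp), Finset.sum_union]
        simp [Finset.disjoint_left]
        intro a h1
        exact h1.le
      rw [Finset.sum_congr rfl fun q _ => this q]
      rw [Finset.sum_add_distrib, Finset.sum_add_distrib, hswap]
      ring
    linarith
  -- cardinality bound
  have hcardN : 2 * s.card ≤ Q ^ 2 := by
    have h : s.card = ∑ q : Fin Q, (Finset.Iio q).card := by
      rw [hs, Finset.card_sigma]
    have h2 : ∀ q : Fin Q, (Finset.Iio q).card = (q : ℕ) := fun q => Fin.card_Iio q
    rw [h, Finset.sum_congr rfl fun q _ => h2 q, Fin.sum_univ_eq_sum_range (fun i => i)]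
    have := Finset.sum_range_id_mul_two Q
    calc 2 * ∑ i ∈ Finset.range Q, i = (∑ i ∈ Finset.range Q, i) * 2 := by ring
      _ = Q * (Q - 1) := this
      _ ≤ Q * Q := Nat.mul_le_mul_left Q (Nat.sub_le Q 1)
      _ = Q ^ 2 := (sq Q).symm
  have hcard : (s.card : ℝ) ≤ (Q : ℝ) ^ 2 / 2 := by
    have : ((2 * s.card : ℕ) : ℝ) ≤ ((Q ^ 2 : ℕ) : ℝ) := Nat.cast_le.mpr hcardN
    push_cast at this
    linarith
  have hT0 : 0 ≤ T := by
    apply Finset.sum_nonneg; intro q _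
    apply Finset.sum_nonneg; intro q' _
    have := hπ0 q; have := hπ0 q'; positivity
  have hc0 : (0 : ℝ) ≤ (s.card : ℝ) := Nat.cast_nonneg _
  calc (∑ q, ∑ q' ∈ Finset.Iio q, π q * g q q') ^ 2
      ≤ (s.card : ℝ) * ∑ q, ∑ q' ∈ Finset.Iio q, (π q * g q q') ^ 2 := h1
    _ ≤ (s.card : ℝ) * S := mul_le_mul_of_nonneg_left h2 hc0
    _ ≤ (s.card : ℝ) * (T / 2) := mul_le_mul_of_nonneg_left (by linarith) hc0
    _ ≤ ((Q : ℝ) ^ 2 / 2) * (T / 2) := mul_le_mul_of_nonneg_right hcard (by linarith)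
    _ = ((Q : ℝ) ^ 2 / 4) * T := by ring
end
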